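/- arXiv:1611.08284 — 5 statements merged into one kernel-verified Lean document; each statement's English description precedes it below -/
import Mathlib

section
/- Let m ≥ 1, let 1 ≤ q₁, …, q_m, p, r ≤ ∞ and n ∈ ℕ. Suppose C ≥ 0 is a constant such that for all σ-finite measure spaces, every m-linear operator T : L^{q₁}(μ₁) × ⋯ × L^{q_m}(μ_m) → L^p(ν) bounded with norm at most M, and all families {f^i_{kᵢ}}_{kᵢ=1}^{n} ⊂ L^{qᵢ}(μᵢ) of n functions in each slot, the Marcinkiewicz–Zygmund inequality at exponent r holds with constant C·M. Then for all σ-finite measure spaces (Ω_i',μ_i), (Ω_i,ν_i), all bounded linear operators T_i : L^{qᵢ}(μᵢ) → L^p(νᵢ) with norm at most M_i (i = 1, …, m), and all families {f^i_k}_{k=1}^{n} ⊂ L^{qᵢ}(μᵢ), one has ∏_{i=1}^m ‖(∑_{k=1}^n |T_i(f^i_k)|^r)^{1/r}‖_{L^p(νᵢ)} ≤ C · (∏_{i=1}^m M_i) · ∏_{i=1}^m ‖(∑_{k=1}^n |f^i_k|^r)^{1/r}‖_{L^{qᵢ}(μᵢ)}. -/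
/-!
Tensoring the operators gives the `m`-linear operator `(g_i) ↦ ((ω_i) ↦ ∏ T_i g_i (ω_i))` into
`L^p(ν_1 ⊗ ⋯ ⊗ ν_m)`. Since `L^p` norms of tensor products factor over product measures, its norm
is at most `∏ M_i`; and since the `ℓ^r` norm over multi-indices of a tensor product of sequences is
the product of their `ℓ^r` norms, the multilinear inequality for this operator is exactly the
claimed product inequality.
-/

open MeasureTheory ENNReal Function

noncomputable def lrNorm {ι : Type} [Fintype ι] (r : ℝ≥0∞) (a : ι → ℝ) : ℝ :=
  if r = ∞ then ⨆ k, |a k| else (∑ k, |a k| ^ r.toReal) ^ (1 / r.toReal)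

/-- A map `T` on (representatives of) functions which is, in the almost-everywhere sense,
an `m`-linear operator `L^{q₁}(μ₁) × ⋯ × L^{q_m}(μ_m) → L^p(ν)` bounded with norm at most `M`. -/
structure IsBddMultilinear {m : ℕ} {Ω : Fin m → Type} [∀ i, MeasurableSpace (Ω i)]
    (μ : ∀ i, Measure (Ω i)) {Ω' : Type} [MeasurableSpace Ω'] (ν : Measure Ω')
    (q : Fin m → ℝ≥0∞) (p : ℝ≥0∞)
    (T : (∀ i, Ω i → ℝ) → Ω' → ℝ) (M : ℝ) : Prop where
  congr : ∀ f g : ∀ i, Ω i → ℝ, (∀ j, MemLp (f j) (q j) (μ j)) →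
      (∀ j, MemLp (g j) (q j) (μ j)) → (∀ j, f j =ᵐ[μ j] g j) → T f =ᵐ[ν] T g
  multilinear : ∀ (f : ∀ i, Ω i → ℝ), (∀ j, MemLp (f j) (q j) (μ j)) →
      ∀ (i : Fin m) (c : ℝ) (g h : Ω i → ℝ), MemLp g (q i) (μ i) → MemLp h (q i) (μ i) →
        T (update f i fun x => c * g x + h x) =ᵐ[ν]
          fun ω => c * T (update f i g) ω + T (update f i h) ω
  memℒp : ∀ f : ∀ i, Ω i → ℝ, (∀ j, MemLp (f j) (q j) (μ j)) → MemLp (T f) p ν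
  bound : ∀ f : ∀ i, Ω i → ℝ, (∀ j, MemLp (f j) (q j) (μ j)) →
      eLpNorm (T f) p ν ≤ ENNReal.ofReal M * ∏ i, eLpNorm (f i) (q i) (μ i)

/-- The Marcinkiewicz–Zygmund inequality at exponent `r` with constant `K` for the operator `T`
and the finite families `f i (kᵢ)`, `kᵢ = 1, …, n i`. -/
noncomputable def MZineq {m : ℕ} {Ω : Fin m → Type} [∀ i, MeasurableSpace (Ω i)]
    (μ : ∀ i, Measure (Ω i)) {Ω' : Type} [MeasurableSpace Ω'] (ν : Measure Ω')
    (q : Fin m → ℝ≥0∞) (p r : ℝ≥0∞)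
    (T : (∀ i, Ω i → ℝ) → Ω' → ℝ) (K : ℝ)
    (n : Fin m → ℕ) (f : ∀ i, Fin (n i) → Ω i → ℝ) : Prop :=
  eLpNorm (fun ω => lrNorm r fun k : ∀ i, Fin (n i) => T (fun i => f i (k i)) ω) p ν
    ≤ ENNReal.ofReal K *
      ∏ i, eLpNorm (fun x => lrNorm r fun kᵢ : Fin (n i) => f i kᵢ x) (q i) (μ i)

/-- The triple `(q, p, r)` satisfies the (m-linear) Marcinkiewicz–Zygmund inequality
with constant `C`: for all σ-finite measure spaces, every bounded multilinear operator with
norm at most `M`, and all finite families in each slot, the MZ inequality holds with `C * M`. -/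
def MZprop (m : ℕ) (q : Fin m → ℝ≥0∞) (p r : ℝ≥0∞) (C : ℝ) : Prop :=
  ∀ (Ω : Fin m → Type) [∀ i, MeasurableSpace (Ω i)] (μ : ∀ i, Measure (Ω i))
    [∀ i, SigmaFinite (μ i)]
    (Ω' : Type) [MeasurableSpace Ω'] (ν : Measure Ω') [SigmaFinite ν]
    (T : (∀ i, Ω i → ℝ) → Ω' → ℝ) (M : ℝ), 0 ≤ M →
    IsBddMultilinear μ ν q p T M →
    ∀ (n : Fin m → ℕ) (f : ∀ i, Fin (n i) → Ω i → ℝ),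
      (∀ i kᵢ, MemLp (f i kᵢ) (q i) (μ i)) →
      MZineq μ ν q p r T (C * M) n f

/-- A map `S` on (representatives of) functions which is, in the almost-everywhere sense,
a linear operator `L^q(μ) → L^p(ν)` bounded with norm at most `M`. -/
structure IsBddLinear {Ω : Type} [MeasurableSpace Ω] (μ : Measure Ω)
    {Ω' : Type} [MeasurableSpace Ω'] (ν : Measure Ω')
    (q p : ℝ≥0∞) (S : (Ω → ℝ) → Ω' → ℝ) (M : ℝ) : Prop where
  congr : ∀ f g : Ω → ℝ, MemLp f q μ → MemLp g q μ → f =ᵐ[μ] g → S f =ᵐ[ν] S g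
  linear : ∀ (c : ℝ) (g h : Ω → ℝ), MemLp g q μ → MemLp h q μ →
    S (fun x => c * g x + h x) =ᵐ[ν] fun ω => c * S g ω + S h ω
  memℒp : ∀ f : Ω → ℝ, MemLp f q μ → MemLp (S f) p ν
  bound : ∀ f : Ω → ℝ, MemLp f q μ →
    eLpNorm (S f) p ν ≤ ENNReal.ofReal M * eLpNorm f q μ

/-- The `n`-restricted multilinear Marcinkiewicz–Zygmund property: the MZ inequality holds
with constant `C * M` for every bounded multilinear operator (with norm at most `M`) and all
families of `n` functions in each slot. -/
def MZpropN (m : ℕ) (q : Fin m → ℝ≥0∞) (p r : ℝ≥0∞) (C : ℝ) (n : ℕ) : Prop :=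
  ∀ (Ω : Fin m → Type) [∀ i, MeasurableSpace (Ω i)] (μ : ∀ i, Measure (Ω i))
    [∀ i, SigmaFinite (μ i)]
    (Ω' : Type) [MeasurableSpace Ω'] (ν : Measure Ω') [SigmaFinite ν]
    (T : (∀ i, Ω i → ℝ) → Ω' → ℝ) (M : ℝ), 0 ≤ M →
    IsBddMultilinear μ ν q p T M →
    ∀ f : ∀ i, Fin n → Ω i → ℝ, (∀ i k, MemLp (f i k) (q i) (μ i)) →
      MZineq μ ν q p r T (C * M) (fun _ => n) f

section ProductMeasure

variable {α β : Type*} [MeasurableSpace α] [MeasurableSpace β]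

theorem essSup_mul_prod (μ : Measure α) (ν : Measure β) [SFinite μ] [SFinite ν]
    (F : α → ℝ≥0∞) (G : β → ℝ≥0∞) :
    essSup (fun z : α × β => F z.1 * G z.2) (μ.prod ν) = essSup F μ * essSup G ν := by
  set S := essSup (fun z : α × β => F z.1 * G z.2) (μ.prod ν)
  refine le_antisymm ?_ ?_
  · refine essSup_le_of_ae_le _ ?_
    filter_upwards [Measure.quasiMeasurePreserving_fst.ae (ae_le_essSup F),
      Measure.quasiMeasurePreserving_snd.ae (ae_le_essSup G)] with z hF hG
    exact mul_le_mul' hF hG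
  · have hslice : ∀ᵐ x ∂μ, F x * essSup G ν ≤ S := by
      filter_upwards [Measure.ae_ae_of_ae_prod (ae_le_essSup (μ := μ.prod ν)
        (fun z : α × β => F z.1 * G z.2))] with x hx
      rw [← ENNReal.essSup_const_mul]
      exact essSup_le_of_ae_le _ hx
    simp_rw [mul_comm _ (essSup G ν)] at hslice
    rw [mul_comm, ← ENNReal.essSup_const_mul]
    exact essSup_le_of_ae_le _ hslice

theorem eLpNorm_mul_prod {𝕜 : Type*} [NormedField 𝕜] {μ : Measure α} {ν : Measure β}
    [SFinite μ] [SFinite ν] {f : α → 𝕜} {g : β → 𝕜} (hf : AEStronglyMeasurable f μ)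
    (hg : AEStronglyMeasurable g ν) {p : ℝ≥0∞} (hp : p ≠ 0) :
    eLpNorm (fun z : α × β => f z.1 * g z.2) p (μ.prod ν) = eLpNorm f p μ * eLpNorm g p ν := by
  rcases eq_or_ne p ∞ with rfl | hp_top
  · simp only [eLpNorm_exponent_top, eLpNormEssSup, enorm_mul]
    exact essSup_mul_prod μ ν (fun x => ‖f x‖ₑ) (fun y => ‖g y‖ₑ)
  · simp only [eLpNorm_eq_lintegral_rpow_enorm_toReal hp hp_top, enorm_mul,
      ENNReal.mul_rpow_of_nonneg _ _ ENNReal.toReal_nonneg]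
    rw [lintegral_prod_mul (hf.enorm.pow_const _) (hg.enorm.pow_const _),
      ENNReal.mul_rpow_of_nonneg _ _ (by positivity)]

end ProductMeasure

theorem eLpNorm_prod_pi {𝕜 : Type*} [NormedField 𝕜] {m : ℕ} {Ω : Fin m → Type*}
    [∀ i, MeasurableSpace (Ω i)] (ν : ∀ i, Measure (Ω i)) [∀ i, SigmaFinite (ν i)]
    {ψ : ∀ i, Ω i → 𝕜} (hψ : ∀ i, AEStronglyMeasurable (ψ i) (ν i)) {p : ℝ≥0∞} (hp : p ≠ 0) :
    eLpNorm (fun ω : ∀ i, Ω i => ∏ i, ψ i (ω i)) p (Measure.pi ν)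
      = ∏ i, eLpNorm (ψ i) p (ν i) := by
  induction m with
  | zero =>
    have hν : Measure.pi ν ≠ 0 := fun h => by simpa [h] using Measure.pi_empty_univ ν
    simp [eLpNorm_const _ hp hν]
  | succ m ih =>
    let s : Fin m → Fin (m + 1) := Fin.succAbove 0
    have htail : AEStronglyMeasurable (fun y : ∀ j, Ω (s j) => ∏ j, ψ (s j) (y j))
        (Measure.pi fun j => ν (s j)) :=
      Finset.aestronglyMeasurable_fun_prod _ fun j _ => (hψ (s j)).comp_quasiMeasurePreserving
        (Measure.quasiMeasurePreserving_eval (fun j => ν (s j)) j)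
    have hsplit : (fun ω : ∀ i, Ω i => ∏ i, ψ i (ω i))
        = (fun z => ψ 0 z.1 * ∏ j, ψ (s j) (z.2 j)) ∘ MeasurableEquiv.piFinSuccAbove Ω 0 := by
      funext ω
      exact Fin.prod_univ_succAbove (fun i => ψ i (ω i)) 0
    have hmul : AEStronglyMeasurable (fun z => ψ 0 z.1 * ∏ j, ψ (s j) (z.2 j))
        ((ν 0).prod (Measure.pi fun j => ν (s j))) := (hψ 0).comp_fst.mul htail.comp_snd
    rw [hsplit, eLpNorm_comp_measurePreserving hmul (measurePreserving_piFinSuccAbove ν 0),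
      eLpNorm_mul_prod (hψ 0) htail hp, ih _ (fun j => hψ (s j)), Fin.prod_univ_succAbove _ 0]

section lrNorm

variable {ι : Type} [Fintype ι]

theorem measurable_lrNorm (r : ℝ≥0∞) : Measurable (lrNorm r : (ι → ℝ) → ℝ) := by
  unfold lrNorm
  split_ifs
  · exact Measurable.iSup fun k => (measurable_pi_apply k).abs
  · fun_prop

theorem lrNorm_prod [DecidableEq ι] {κ : ι → Type} [∀ i, Fintype (κ i)] (r : ℝ≥0∞)
    (a : ∀ i, κ i → ℝ) :
    lrNorm r (fun k : ∀ i, κ i => ∏ i, a i (k i)) = ∏ i, lrNorm r (a i) := by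
  unfold lrNorm
  split_ifs
  · simp only [Finset.abs_prod]
    exact Real.iSup_prod_eq_prod_iSup_of_nonneg fun i j => abs_nonneg (a i j)
  · simp only [Finset.abs_prod, ← Real.finsetProd_rpow _ _ fun i _ => abs_nonneg _]
    rw [← Fintype.prod_sum fun i j => |a i j| ^ r.toReal,
      Real.finsetProd_rpow _ _ fun i _ => by positivity]

end lrNorm

section TensorProduct

variable {m : ℕ} {Ω' Ω : Fin m → Type}

def tensorOp (T : ∀ i, (Ω' i → ℝ) → Ω i → ℝ) : (∀ i, Ω' i → ℝ) → (∀ i, Ω i) → ℝ :=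
  fun g ω => ∏ i, T i (g i) (ω i)

theorem tensorOp_update (T : ∀ i, (Ω' i → ℝ) → Ω i → ℝ) (g : ∀ i, Ω' i → ℝ) (i : Fin m)
    (w : Ω' i → ℝ) (ω : ∀ i, Ω i) :
    tensorOp T (update g i w) ω = T i w (ω i) * ∏ j ∈ Finset.univ.erase i, T j (g j) (ω j) := by
  rw [tensorOp, ← Finset.mul_prod_erase _ _ (Finset.mem_univ i), update_self]
  congr 1
  refine Finset.prod_congr rfl fun j hj => ?_
  rw [update_of_ne (Finset.ne_of_mem_erase hj)]

variable [∀ i, MeasurableSpace (Ω' i)] [∀ i, MeasurableSpace (Ω i)]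
  {μ : ∀ i, Measure (Ω' i)} {ν : ∀ i, Measure (Ω i)} [∀ i, SigmaFinite (ν i)]
  {q : Fin m → ℝ≥0∞} {p : ℝ≥0∞} {T : ∀ i, (Ω' i → ℝ) → Ω i → ℝ} {M : Fin m → ℝ}

theorem eLpNorm_tensorOp (hp : p ≠ 0) (hT : ∀ i, IsBddLinear (μ i) (ν i) (q i) p (T i) (M i))
    {g : ∀ i, Ω' i → ℝ} (hg : ∀ i, MemLp (g i) (q i) (μ i)) :
    eLpNorm (tensorOp T g) p (Measure.pi ν) = ∏ i, eLpNorm (T i (g i)) p (ν i) :=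
  eLpNorm_prod_pi ν (fun i => ((hT i).memℒp _ (hg i)).aestronglyMeasurable) hp

theorem isBddMultilinear_tensorOp (hp : p ≠ 0) (hM : ∀ i, 0 ≤ M i)
    (hT : ∀ i, IsBddLinear (μ i) (ν i) (q i) p (T i) (M i)) :
    IsBddMultilinear μ (Measure.pi ν) q p (tensorOp T) (∏ i, M i) where
  congr g h hg hh hgh := by
    filter_upwards [Measure.ae_eq_pi fun i => (hT i).congr _ _ (hg i) (hh i) (hgh i)] with ω hω
    exact Finset.prod_congr rfl fun i _ => congrFun hω i
  multilinear g _ i c u v hu hv := by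
    filter_upwards [Measure.tendsto_eval_ae_ae.eventually ((hT i).linear c u v hu hv)] with ω hω
    simp only [tensorOp_update, hω]
    ring
  memℒp g hg := by
    refine ⟨Finset.aestronglyMeasurable_fun_prod _ fun i _ =>
      ((hT i).memℒp _ (hg i)).aestronglyMeasurable.comp_quasiMeasurePreserving
        (Measure.quasiMeasurePreserving_eval ν i), ?_⟩
    rw [eLpNorm_tensorOp hp hT hg]
    exact ENNReal.prod_lt_top fun i _ => ((hT i).memℒp _ (hg i)).eLpNorm_lt_top
  bound g hg := by
    rw [eLpNorm_tensorOp hp hT hg, ENNReal.ofReal_prod_of_nonneg fun i _ => hM i,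
      ← Finset.prod_mul_distrib]
    exact Finset.prod_le_prod' fun i _ => (hT i).bound _ (hg i)

end TensorProduct

theorem statement2_general (m : ℕ) (q : Fin m → ℝ≥0∞)
    (p r : ℝ≥0∞) (hp : 1 ≤ p) (n : ℕ) (C : ℝ)
    (hMZ : MZpropN m q p r C n) :
    ∀ (Ω' : Fin m → Type) [∀ i, MeasurableSpace (Ω' i)] (μ : ∀ i, Measure (Ω' i))
      [∀ i, SigmaFinite (μ i)]
      (Ω : Fin m → Type) [∀ i, MeasurableSpace (Ω i)] (ν : ∀ i, Measure (Ω i))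
      [∀ i, SigmaFinite (ν i)]
      (T : ∀ i, (Ω' i → ℝ) → Ω i → ℝ) (M : Fin m → ℝ),
      (∀ i, 0 ≤ M i) →
      (∀ i, IsBddLinear (μ i) (ν i) (q i) p (T i) (M i)) →
      ∀ f : ∀ i, Fin n → Ω' i → ℝ, (∀ i k, MemLp (f i k) (q i) (μ i)) →
      ∏ i, eLpNorm (fun x => lrNorm r fun k : Fin n => T i (f i k) x) p (ν i)
        ≤ ENNReal.ofReal (C * ∏ i, M i) *
          ∏ i, eLpNorm (fun x => lrNorm r fun k : Fin n => f i k x) (q i) (μ i) := by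
  intro Ω' _ μ _ Ω _ ν _ T M hM hT f hf
  have hp0 : p ≠ 0 := (one_pos.trans_le hp).ne'
  have hTf : ∀ i, AEStronglyMeasurable (fun x => lrNorm r fun k => T i (f i k) x) (ν i) :=
    fun i => ((measurable_lrNorm r).comp_aemeasurable (aemeasurable_pi_lambda _ fun k =>
      ((hT i).memℒp _ (hf i k)).aestronglyMeasurable.aemeasurable)).aestronglyMeasurable
  calc ∏ i, eLpNorm (fun x => lrNorm r fun k => T i (f i k) x) p (ν i)
      = eLpNorm (fun ω => lrNorm r fun k : Fin m → Fin n =>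
          tensorOp T (fun i => f i (k i)) ω) p (Measure.pi ν) := by
        rw [← eLpNorm_prod_pi ν hTf hp0]
        congr with ω
        exact (lrNorm_prod r fun i k => T i (f i k) (ω i)).symm
    _ ≤ _ := hMZ Ω' μ (∀ i, Ω i) (Measure.pi ν) (tensorOp T) _
        (Finset.prod_nonneg fun i _ => hM i) (isBddMultilinear_tensorOp hp0 hM hT) f hf

/-- If the `m`-linear Marcinkiewicz–Zygmund inequality (for families of `n`
functions per slot) holds with uniform constant `C`, then the corresponding product inequality
holds for any `m`-tuple of bounded linear operators. -/
theorem statement2 (m : ℕ) (hm : 1 ≤ m) (q : Fin m → ℝ≥0∞) (hq : ∀ i, 1 ≤ q i)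
    (p r : ℝ≥0∞) (hp : 1 ≤ p) (hr : 1 ≤ r) (n : ℕ) (C : ℝ) (hC : 0 ≤ C)
    (hMZ : MZpropN m q p r C n) :
    ∀ (Ω' : Fin m → Type) [∀ i, MeasurableSpace (Ω' i)] (μ : ∀ i, Measure (Ω' i))
      [∀ i, SigmaFinite (μ i)]
      (Ω : Fin m → Type) [∀ i, MeasurableSpace (Ω i)] (ν : ∀ i, Measure (Ω i))
      [∀ i, SigmaFinite (ν i)]
      (T : ∀ i, (Ω' i → ℝ) → Ω i → ℝ) (M : Fin m → ℝ),
      (∀ i, 0 ≤ M i) →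
      (∀ i, IsBddLinear (μ i) (ν i) (q i) p (T i) (M i)) →
      ∀ f : ∀ i, Fin n → Ω' i → ℝ, (∀ i k, MemLp (f i k) (q i) (μ i)) →
      ∏ i, eLpNorm (fun x => lrNorm r fun k : Fin n => T i (f i k) x) p (ν i)
        ≤ ENNReal.ofReal (C * ∏ i, M i) *
          ∏ i, eLpNorm (fun x => lrNorm r fun k : Fin n => f i k x) (q i) (μ i) :=
  statement2_general m q p r hp n C hMZ
end

section
/- Let m ≥ 1, let 1 ≤ q₁, …, q_m ≤ ∞, let 1 ≤ r ≤ ∞, let n ∈ ℕ, and let 1 ≤ p₂ < p₁ ≤ ∞. Suppose C ≥ 0 is a constant such that for all σ-finite measure spaces, every m-linear operator T : L^{q₁}(μ₁) × ⋯ × L^{q_m}(μ_m) → L^{p₂}(ν) bounded with norm at most M, and all families of n functions {f^i_{kᵢ}}_{kᵢ=1}^{n} ⊂ L^{qᵢ}(μᵢ), the Marcinkiewicz–Zygmund inequality at exponent r (with target exponent p₂) holds with constant C·M. Then the same constant C works with target exponent p₁: for all σ-finite measure spaces, every m-linear operator T : L^{q₁}(μ₁) × ⋯ × L^{q_m}(μ_m)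 → L^{p₁}(ν) bounded with norm at most M, and all families of n functions {f^i_{kᵢ}}_{kᵢ=1}^{n} ⊂ L^{qᵢ}(μᵢ), the Marcinkiewicz–Zygmund inequality at exponent r holds with constant C·M. -/
open MeasureTheory ENNReal Function

/-!
Let `G` be the `ℓ^r`-function of the family `T (f k)`. For a weight `w ≥ 0` with `‖w‖_s ≤ 1`,
where `1/p₂ = 1/s + 1/p₁`, Hölder's inequality makes `w • T` a multilinear operator into `L^{p₂}`
of norm at most `M`, and the `ℓ^r`-function of its family is `w • G`. The hypothesis therefore
bounds `‖w • G‖_{p₂}` by `C M ∏ᵢ ‖(∑ₖ |fⁱₖ|^r)^{1/r}‖_{qᵢ}` for all such `w`, and `‖G‖_{p₁}` is the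
supremum of `‖w • G‖_{p₂}` over these weights: for `p₁ < ∞` it is attained at a multiple of
`|G|^{p₁/s}`, and for `p₁ = ∞` it is approached by normalized indicators of sets on which `|G|`
exceeds a level below its essential supremum.
-/

section lrNorm

variable {ι : Type} [Fintype ι]

lemma lrNorm_eq_norm_toLp {r : ℝ≥0∞} (hr : r ≠ 0) (a : ι → ℝ) :
    lrNorm r a = ‖WithLp.toLp r a‖ := by
  rcases eq_or_ne r ∞ with rfl | hr'
  · simp [lrNorm, PiLp.norm_eq_ciSup, Real.norm_eq_abs]
  · rw [PiLp.norm_eq_sum (ENNReal.toReal_pos hr hr')]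
    simp [lrNorm, hr', Real.norm_eq_abs]

variable {r : ℝ≥0∞} [Fact (1 ≤ r)]

lemma lrNorm_eq_norm (a : ι → ℝ) : lrNorm r a = ‖WithLp.toLp r a‖ :=
  lrNorm_eq_norm_toLp (zero_lt_one.trans_le Fact.out).ne' a

lemma lrNorm_nonneg (a : ι → ℝ) : 0 ≤ lrNorm r a := by
  rw [lrNorm_eq_norm]; exact norm_nonneg _

lemma lrNorm_const_mul {c : ℝ} (hc : 0 ≤ c) (a : ι → ℝ) :
    lrNorm r (fun k => c * a k) = c * lrNorm r a := by
  calc lrNorm r (fun k => c * a k) = ‖c • WithLp.toLp r a‖ := lrNorm_eq_norm _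
    _ = c * lrNorm r a := by rw [norm_smul, Real.norm_of_nonneg hc, lrNorm_eq_norm]

lemma lrNorm_le_sum_abs (a : ι → ℝ) : lrNorm r a ≤ ∑ k, |a k| := by
  classical
  conv_lhs => rw [lrNorm_eq_norm, ← Finset.univ_sum_single a, WithLp.toLp_sum]
  refine (norm_sum_le _ _).trans_eq (Finset.sum_congr rfl fun k _ => ?_)
  rw [← PiLp.single, PiLp.norm_single, Real.norm_eq_abs]

lemma continuous_lrNorm : Continuous (lrNorm r : (ι → ℝ) → ℝ) := by
  simp_rw [funext lrNorm_eq_norm]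
  fun_prop

end lrNorm

lemma memLp_lrNorm {ι : Type} [Fintype ι] {r : ℝ≥0∞} [Fact (1 ≤ r)] {Ω : Type}
    [MeasurableSpace Ω] {ν : Measure Ω} {p : ℝ≥0∞} {a : ι → Ω → ℝ} (ha : ∀ k, MemLp (a k) p ν) :
    MemLp (fun ω => lrNorm r fun k => a k ω) p ν := by
  have hsum : MemLp (∑ k, fun ω => ‖a k ω‖) p ν := memLp_finsetSum' _ fun k _ => (ha k).norm
  refine hsum.mono ?_ (ae_of_all _ fun ω => ?_)
  · refine continuous_lrNorm.comp_aestronglyMeasurable ?_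
    exact (aemeasurable_pi_lambda _ fun k => (ha k).1.aemeasurable).aestronglyMeasurable
  · rw [Real.norm_of_nonneg (lrNorm_nonneg _), Finset.sum_apply]
    refine (lrNorm_le_sum_abs _).trans (le_trans ?_ (Real.le_norm_self _))
    simp [Real.norm_eq_abs]

lemma IsBddMultilinear.mul_of_eLpNorm_le_one {m : ℕ} {Ω : Fin m → Type}
    [∀ i, MeasurableSpace (Ω i)] {μ : ∀ i, Measure (Ω i)} {Ω' : Type} [MeasurableSpace Ω']
    {ν : Measure Ω'} {q : Fin m → ℝ≥0∞} {p₁ p₂ s : ℝ≥0∞} [HolderTriple s p₁ p₂]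
    {T : (∀ i, Ω i → ℝ) → Ω' → ℝ} {M : ℝ} (hT : IsBddMultilinear μ ν q p₁ T M)
    {w : Ω' → ℝ} (hw : AEStronglyMeasurable w ν) (hws : eLpNorm w s ν ≤ 1) :
    IsBddMultilinear μ ν q p₂ (fun f ω => w ω * T f ω) M where
  congr f g hf hg hfg := by
    filter_upwards [hT.congr f g hf hg hfg] with ω hω
    rw [hω]
  multilinear f hf i c g h hg hh := by
    filter_upwards [hT.multilinear f hf i c g h hg hh] with ω hω
    rw [hω]
    ring
  memℒp f hf := (hT.memℒp f hf).smul (p := s) ⟨hw, hws.trans_lt one_lt_top⟩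
  bound f hf := calc
    eLpNorm (w • T f) p₂ ν ≤ eLpNorm w s ν * eLpNorm (T f) p₁ ν :=
      eLpNorm_smul_le_mul_eLpNorm (hT.memℒp f hf).1 hw
    _ ≤ 1 * (ENNReal.ofReal M * ∏ i, eLpNorm (f i) (q i) (μ i)) := mul_le_mul' hws (hT.bound f hf)
    _ = ENNReal.ofReal M * ∏ i, eLpNorm (f i) (q i) (μ i) := one_mul _

lemma ENNReal.HolderTriple.mul_div_add_one {p₁ p₂ s : ℝ≥0∞} [HolderTriple s p₁ p₂]
    (hs0 : s ≠ 0) (hp₁0 : p₁ ≠ 0) (hp₁ : p₁ ≠ ∞) : p₂ * (p₁ / s + 1) = p₁ := by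
  have hp₂ : p₂⁻¹ = s⁻¹ + p₁⁻¹ := (HolderTriple.inv_add_inv_eq_inv s p₁ p₂).symm
  have hp₂0 : p₂ ≠ 0 := by
    rw [← ENNReal.inv_ne_top, hp₂]
    exact ENNReal.add_ne_top.2 ⟨ENNReal.inv_ne_top.2 hs0, ENNReal.inv_ne_top.2 hp₁0⟩
  have hp₂top : p₂ ≠ ∞ := by simp [← ENNReal.inv_ne_zero, hp₂, hp₁]
  rw [← ENNReal.mul_inv_cancel hp₁0 hp₁, div_eq_mul_inv, ← mul_add, ← hp₂, mul_comm p₁,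
    ← mul_assoc, ENNReal.mul_inv_cancel hp₂0 hp₂top, one_mul]

section Duality

variable {Ω : Type} [MeasurableSpace Ω] {ν : Measure Ω} {G : Ω → ℝ} {R : ℝ≥0∞}

lemma exists_measure_pos_lt_enorm_of_lt_eLpNorm_top [SigmaFinite ν]
    (hG : AEStronglyMeasurable G ν) {t : ℝ≥0∞} (ht : t < eLpNorm G ∞ ν) :
    ∃ B, MeasurableSet B ∧ 0 < ν B ∧ ν B < ∞ ∧ ∀ᵐ ω ∂ν, ω ∈ B → t < ‖G ω‖ₑ := by
  set A := {ω | t < ‖hG.mk G ω‖ₑ}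
  have hA : MeasurableSet A :=
    measurableSet_lt measurable_const hG.stronglyMeasurable_mk.measurable.enorm
  have hνA : 0 < ν A := by
    refine pos_iff_ne_zero.2 fun hA0 => ht.not_ge ?_
    rw [eLpNorm_congr_ae hG.ae_eq_mk, eLpNorm_exponent_top]
    exact eLpNormEssSup_le_of_ae_enorm_bound
      ((measure_eq_zero_iff_ae_notMem.1 hA0).mono fun ω hω => not_lt.1 hω)
  obtain ⟨B, hB, hBA, hB0, hBfin⟩ := Measure.exists_subset_measure_lt_top hA hνA
  refine ⟨B, hB, hB0, hBfin, ?_⟩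
  filter_upwards [hG.ae_eq_mk] with ω hω hωB
  exact hω ▸ hBA hωB

lemma eLpNorm_top_le_of_forall_weight [SigmaFinite ν] {p : ℝ≥0∞} (hp0 : p ≠ 0) (hp : p ≠ ∞)
    (hG : AEStronglyMeasurable G ν)
    (hw : ∀ w : Ω → ℝ, AEStronglyMeasurable w ν → (∀ ω, 0 ≤ w ω) → eLpNorm w p ν ≤ 1 →
      eLpNorm (fun ω => w ω * G ω) p ν ≤ R) :
    eLpNorm G ∞ ν ≤ R := by
  refine le_of_forall_lt_imp_le_of_dense fun t ht => ?_
  obtain ⟨B, hB, hB0, hBfin, hBG⟩ := exists_measure_pos_lt_enorm_of_lt_eLpNorm_top hG ht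
  have hνB : ν B ^ (1 / p.toReal) ≠ 0 := by simp [hB0.ne', hBfin.ne]
  have hνB' : ν B ^ (1 / p.toReal) ≠ ∞ := by simp [hB0.ne', hBfin.ne]
  set c : ℝ := ((ν B ^ (1 / p.toReal))⁻¹).toReal
  have hc : ‖c‖ₑ = (ν B ^ (1 / p.toReal))⁻¹ := by
    rw [Real.enorm_of_nonneg ENNReal.toReal_nonneg, ENNReal.ofReal_toReal (by simpa using hνB)]
  have hwp : eLpNorm (B.indicator fun _ => c) p ν = 1 := by
    rw [eLpNorm_indicator_const hB hp0 hp, hc, ENNReal.inv_mul_cancel hνB hνB']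
  calc t = eLpNorm (B.indicator fun _ => c * t.toReal) p ν := by
        rw [eLpNorm_indicator_const hB hp0 hp, enorm_mul, hc,
          Real.enorm_of_nonneg ENNReal.toReal_nonneg, ENNReal.ofReal_toReal ht.ne_top,
          mul_right_comm, ENNReal.inv_mul_cancel hνB hνB', one_mul]
    _ ≤ eLpNorm (fun ω => B.indicator (fun _ => c) ω * G ω) p ν := by
        refine eLpNorm_mono_ae ?_
        filter_upwards [hBG] with ω hω
        by_cases hωB : ω ∈ B
        · simp only [Set.indicator_of_mem hωB, norm_mul]
          refine mul_le_mul_of_nonneg_left ?_ (norm_nonneg c)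
          rw [Real.norm_of_nonneg ENNReal.toReal_nonneg]
          exact ENNReal.toReal_le_of_le_ofReal (norm_nonneg _) (ofReal_norm (G ω) ▸ hω hωB).le
        · simp [Set.indicator_of_notMem hωB]
    _ ≤ R := hw _ (aestronglyMeasurable_const.indicator hB)
        (fun ω => Set.indicator_nonneg (fun _ _ => ENNReal.toReal_nonneg) ω) hwp.le

lemma eLpNorm_le_of_forall_weight_of_ne_top {p₁ p₂ s : ℝ≥0∞} [HolderTriple s p₁ p₂]
    (hs0 : s ≠ 0) (hs : s ≠ ∞) (hp₁0 : p₁ ≠ 0) (hp₁ : p₁ ≠ ∞)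
    (hG : AEStronglyMeasurable G ν) (hGfin : eLpNorm G p₁ ν ≠ ∞)
    (hw : ∀ w : Ω → ℝ, AEStronglyMeasurable w ν → (∀ ω, 0 ≤ w ω) → eLpNorm w s ν ≤ 1 →
      eLpNorm (fun ω => w ω * G ω) p₂ ν ≤ R) :
    eLpNorm G p₁ ν ≤ R := by
  set N := eLpNorm G p₁ ν
  rcases eq_or_ne N 0 with hN0 | hN0
  · rw [hN0]; exact zero_le
  -- the extremal weight is `w = ‖G‖ ^ a / N ^ a` with `s * a = p₁`, so that `p₂ * (a + 1) = p₁`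
  set a := p₁.toReal / s.toReal
  have ha : 0 < a := div_pos (ENNReal.toReal_pos hp₁0 hp₁) (ENNReal.toReal_pos hs0 hs)
  have ha' : ENNReal.ofReal a = p₁ / s := by
    rw [ENNReal.ofReal_div_of_pos (ENNReal.toReal_pos hs0 hs), ENNReal.ofReal_toReal hp₁,
      ENNReal.ofReal_toReal hs]
  have hsa : s * ENNReal.ofReal a = p₁ := by rw [ha', ENNReal.mul_div_cancel hs0 hs]
  have hpa : p₂ * ENNReal.ofReal (a + 1) = p₁ := by
    rw [ENNReal.ofReal_add ha.le zero_le_one, ENNReal.ofReal_one, ha',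
      ENNReal.HolderTriple.mul_div_add_one hs0 hp₁0 hp₁]
  set c : ℝ := (N ^ a)⁻¹.toReal
  have hc : ‖c‖ₑ * N ^ a = 1 := by
    rw [Real.enorm_of_nonneg ENNReal.toReal_nonneg,
      ENNReal.ofReal_toReal (by simp [hN0, ha.le]), ENNReal.inv_mul_cancel (by simp [hN0, hGfin])
        (by simp [hN0, hGfin])]
  have hwG : eLpNorm (fun ω => c * ‖G ω‖ ^ a * G ω) p₂ ν = N := by
    calc eLpNorm (fun ω => c * ‖G ω‖ ^ a * G ω) p₂ ν
        = eLpNorm (c • fun ω => ‖G ω‖ ^ (a + 1)) p₂ ν := by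
          refine eLpNorm_congr_norm_ae (ae_of_all _ fun ω => ?_)
          simp only [Pi.smul_apply, smul_eq_mul, norm_mul, Real.rpow_add_one' (norm_nonneg _)
            (by positivity : a + 1 ≠ 0), Real.norm_of_nonneg (norm_nonneg _), mul_assoc,
            Real.norm_of_nonneg (Real.rpow_nonneg (norm_nonneg _) _)]
      _ = ‖c‖ₑ * N ^ a * N := by
          rw [eLpNorm_const_smul, eLpNorm_norm_rpow _ (by positivity), hpa,
            ENNReal.rpow_add _ _ hN0 hGfin, ENNReal.rpow_one, mul_assoc]
      _ = N := by rw [hc, one_mul]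
  refine hwG ▸ hw _ ?_ (fun ω => by positivity) ?_
  · exact (((Real.continuous_rpow_const ha.le).comp_aestronglyMeasurable hG.norm).const_mul c)
  · refine le_of_eq ?_
    calc eLpNorm (fun ω => c * ‖G ω‖ ^ a) s ν = eLpNorm (c • fun ω => ‖G ω‖ ^ a) s ν := rfl
      _ = 1 := by rw [eLpNorm_const_smul, eLpNorm_norm_rpow _ ha, hsa, hc]

end Duality

lemma eLpNorm_le_of_forall_weight {Ω : Type} [MeasurableSpace Ω] {ν : Measure Ω} [SigmaFinite ν]
    {G : Ω → ℝ} {R : ℝ≥0∞} {p₁ p₂ s : ℝ≥0∞} [HolderTriple s p₁ p₂] (hp₂ : p₂ ≠ 0)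
    (hG : AEStronglyMeasurable G ν) (hGfin : eLpNorm G p₁ ν ≠ ∞)
    (hw : ∀ w : Ω → ℝ, AEStronglyMeasurable w ν → (∀ ω, 0 ≤ w ω) → eLpNorm w s ν ≤ 1 →
      eLpNorm (fun ω => w ω * G ω) p₂ ν ≤ R) :
    eLpNorm G p₁ ν ≤ R := by
  have hs0 : s ≠ 0 := fun hs0 => hp₂ (by simpa [hs0] using HolderTriple.inv_eq s p₁ p₂)
  rcases eq_or_ne s ∞ with rfl | hs
  · obtain rfl : p₂ = p₁ := HolderTriple.unique ∞ p₁ p₂ p₁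
    simpa using hw 1 aestronglyMeasurable_const (fun _ => zero_le_one)
      ((eLpNorm_le_of_ae_bound (C := 1) (ae_of_all _ fun _ => by simp)).trans (by simp))
  rcases eq_or_ne p₁ ∞ with rfl | hp₁
  · obtain rfl : p₂ = s := HolderTriple.unique s ∞ p₂ s
    exact eLpNorm_top_le_of_forall_weight hs0 hs hG hw
  · have hp₁0 : p₁ ≠ 0 := (pos_of_ne_zero hp₂ |>.trans_le (HolderTriple.le p₁ s p₂)).ne'
    exact eLpNorm_le_of_forall_weight_of_ne_top hs0 hs hp₁0 hp₁ hG hGfin hw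

theorem statement4_general (m : ℕ) (q : Fin m → ℝ≥0∞)
    (r : ℝ≥0∞) (hr : 1 ≤ r) (n : ℕ) (p₁ p₂ : ℝ≥0∞) (hp₂ : 1 ≤ p₂) (hpp : p₂ < p₁)
    (C : ℝ) (h : MZpropN m q p₂ r C n) :
    MZpropN m q p₁ r C n := by
  intro Ω _ μ _ Ω' _ ν _ T M hM hT f hf
  have : Fact (1 ≤ r) := ⟨hr⟩
  have : HolderTriple (p₂⁻¹ - p₁⁻¹)⁻¹ p₁ p₂ :=
    ⟨by rw [inv_inv, tsub_add_cancel_of_le (ENNReal.inv_le_inv.2 hpp.le)]⟩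
  have hG : MemLp (fun ω => lrNorm r fun k : Fin m → Fin n => T (fun i => f i (k i)) ω) p₁ ν :=
    memLp_lrNorm fun k => hT.memℒp _ fun i => hf i (k i)
  refine eLpNorm_le_of_forall_weight (s := (p₂⁻¹ - p₁⁻¹)⁻¹) (zero_lt_one.trans_le hp₂).ne'
    hG.1 hG.eLpNorm_ne_top fun w hw hw0 hws => ?_
  simpa only [MZineq, lrNorm_const_mul (hw0 _)] using
    h Ω μ Ω' ν _ M hM (hT.mul_of_eLpNorm_le_one hw hws) f hf

/-- Monotonicity in the target exponent: if the `n`-restricted multilinear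
Marcinkiewicz–Zygmund inequality with target exponent `p₂` holds with uniform constant `C`,
then it also holds with target exponent `p₁` whenever `1 ≤ p₂ < p₁ ≤ ∞`. -/
theorem statement4 (m : ℕ) (hm : 1 ≤ m) (q : Fin m → ℝ≥0∞) (hq : ∀ i, 1 ≤ q i)
    (r : ℝ≥0∞) (hr : 1 ≤ r) (n : ℕ) (p₁ p₂ : ℝ≥0∞) (hp₂ : 1 ≤ p₂) (hpp : p₂ < p₁)
    (C : ℝ) (hC : 0 ≤ C) (h : MZpropN m q p₂ r C n) :
    MZpropN m q p₁ r C n :=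
  statement4_general m q r hr n p₁ p₂ hp₂ hpp C h
end

section
/- Let m ≥ 1 and let 1 ≤ q₁, …, q_m ≤ r ≤ p ≤ ∞ (that is, qᵢ ≤ r for every i and r ≤ p). Then for all σ-finite measure spaces, every m-linear operator T : L^{q₁}(μ₁) × ⋯ × L^{q_m}(μ_m) → L^p(ν) bounded with norm at most M, and all finite families {f^i_{kᵢ}}_{kᵢ=1}^{nᵢ} ⊂ L^{qᵢ}(μᵢ), the Marcinkiewicz–Zygmund inequality at exponent r holds with constant M (i.e., with C = 1). -/
/-!
Two instances of Minkowski's integral inequality, each with a counting measure on one side, carry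
the proof. Since `r ≤ p`, the triangle inequality in `L^{p/r}` applied to `∑ₖ |T fₖ|^r` bounds the
`L^p` norm of the `ℓ^r` norm of `(T fₖ)ₖ` by the `ℓ^r` norm of the `‖T fₖ‖_p`. Each of these is at
most `M ∏ᵢ ‖f^i_{kᵢ}‖_{qᵢ}`, and the `ℓ^r` norm of such a tensor product is the product of the
`ℓ^r` norms in each index. Finally, since `qᵢ ≤ r`, the `ℓ^{r/qᵢ}` norm of the integrals
`∫ |f^i_k|^{qᵢ}` is at most the integral of the `ℓ^{r/qᵢ}` norms; this follows by duality from
Hölder's inequality in `k`.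
-/

open MeasureTheory ENNReal Function

noncomputable def elrNorm {ι : Type*} [Fintype ι] (r : ℝ≥0∞) (a : ι → ℝ≥0∞) : ℝ≥0∞ :=
  if r = ∞ then ⨆ k, a k else (∑ k, a k ^ r.toReal) ^ (1 / r.toReal)

theorem ENNReal.iSup_prod_eq_prod_iSup {α : Type*} [Fintype α] {κ : α → Type*}
    [∀ a, Finite (κ a)] (f : ∀ a, κ a → ℝ≥0∞) :
    ⨆ i : ∀ a, κ a, ∏ a, f a (i a) = ∏ a, ⨆ j, f a j := by
  rcases isEmpty_or_nonempty (∀ a, κ a) with h | h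
  · rw [iSup_of_empty, bot_eq_zero, eq_comm, Finset.prod_eq_zero_iff]
    obtain ⟨a, ha⟩ := isEmpty_pi.mp h
    exact ⟨a, Finset.mem_univ a, iSup_of_empty _⟩
  refine le_antisymm (iSup_le fun i => Finset.prod_le_prod' fun a _ => le_iSup (f a) (i a)) ?_
  rw [Classical.nonempty_pi] at h
  choose i hi using fun a => exists_eq_ciSup_of_finite (f := f a)
  simp only [← hi]
  exact le_iSup (fun i : ∀ a, κ a => ∏ a, f a (i a)) i

lemma ENNReal.rpow_one_div_le_of_le_rpow_mul {S I : ℝ≥0∞} {t t' : ℝ} (htt' : t.HolderConjugate t')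
    (hS : S ≠ ∞) (h : S ≤ S ^ (1 / t') * I) : S ^ (1 / t) ≤ I := by
  rcases eq_or_ne S 0 with rfl | hS0
  · rw [ENNReal.zero_rpow_of_pos (one_div_pos.2 htt'.pos)]
    exact zero_le
  have hS_split : S = S ^ (1 / t') * S ^ (1 / t) := by
    rw [← ENNReal.rpow_add _ _ hS0 hS, one_div, one_div, htt'.symm.inv_add_inv_eq_one,
      ENNReal.rpow_one]
  nth_rewrite 1 [hS_split] at h
  exact (ENNReal.mul_le_mul_iff_right (by simp [hS0, hS, htt'.symm.pos])
    (ENNReal.rpow_ne_top_of_nonneg (one_div_nonneg.2 htt'.symm.nonneg) hS)).1 h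

/- The duality step of Minkowski's integral inequality: write `(∫ h k)^t = (∫ h k)^(t-1) * ∫ h k`
and apply Hölder's inequality in `k` under the integral. -/
lemma sum_rpow_lintegral_le_mul {ι Ω : Type*} [Fintype ι] [MeasurableSpace Ω] {μ : Measure Ω}
    {t t' : ℝ} (htt' : t.HolderConjugate t') {h : ι → Ω → ℝ≥0∞}
    (hh : ∀ k, AEMeasurable (h k) μ) :
    ∑ k, (∫⁻ x, h k x ∂μ) ^ t ≤
      (∑ k, (∫⁻ x, h k x ∂μ) ^ t) ^ (1 / t') * ∫⁻ x, (∑ k, h k x ^ t) ^ (1 / t) ∂μ := by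
  set A := fun k => ∫⁻ x, h k x ∂μ
  have hpow : ∀ k, (A k ^ (t - 1)) ^ t' = A k ^ t := fun k => by
    rw [← ENNReal.rpow_mul, htt'.sub_one_mul_conj]
  calc ∑ k, A k ^ t = ∑ k, A k ^ (t - 1) * A k := by
        refine Finset.sum_congr rfl fun k _ => ?_
        conv_lhs => rw [← sub_add_cancel t 1]
        rw [ENNReal.rpow_add_of_nonneg _ _ (sub_nonneg.2 htt'.lt.le) zero_le_one, ENNReal.rpow_one]
    _ = ∫⁻ x, ∑ k, A k ^ (t - 1) * h k x ∂μ := by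
        rw [lintegral_finsetSum' _ fun k _ => (hh k).const_mul _]
        simp_rw [lintegral_const_mul'' _ (hh _), A]
    _ ≤ ∫⁻ x, (∑ k, A k ^ t) ^ (1 / t') * (∑ k, h k x ^ t) ^ (1 / t) ∂μ := by
        refine lintegral_mono fun x => ?_
        simpa only [hpow] using
          ENNReal.inner_le_Lp_mul_Lq Finset.univ (fun k => A k ^ (t - 1)) (h · x) htt'.symm
    _ = _ := lintegral_const_mul'' _ (by fun_prop)

section elrNorm

variable {ι : Type*} [Fintype ι] {r : ℝ≥0∞}

lemma elrNorm_mono {a b : ι → ℝ≥0∞} (h : ∀ k, a k ≤ b k) : elrNorm r a ≤ elrNorm r b := by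
  unfold elrNorm
  split
  · exact iSup_mono h
  · gcongr with k
    exact h k

lemma elrNorm_one (a : ι → ℝ≥0∞) : elrNorm 1 a = ∑ k, a k := by
  simp [elrNorm]

lemma le_elrNorm (hr : r ≠ 0) (a : ι → ℝ≥0∞) (k : ι) : a k ≤ elrNorm r a := by
  unfold elrNorm
  split
  · exact le_iSup a k
  case isFalse hr_top =>
    have ht : r.toReal ≠ 0 := (ENNReal.toReal_pos hr hr_top).ne'
    calc a k = (a k ^ r.toReal) ^ (1 / r.toReal) := by rw [one_div, rpow_rpow_inv ht]
      _ ≤ _ := by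
        gcongr
        exact Finset.single_le_sum (f := (a · ^ r.toReal)) (fun j _ => zero_le) (Finset.mem_univ k)

lemma elrNorm_rpow {u : ℝ} (hu : 0 < u) (a : ι → ℝ≥0∞) :
    elrNorm (r / ENNReal.ofReal u) (fun k => a k ^ u) = elrNorm r a ^ u := by
  unfold elrNorm
  by_cases hr : r = ∞
  · simp only [hr, top_div_of_ne_top ofReal_ne_top, if_true]
    exact ((ENNReal.orderIsoRpow u hu).map_iSup a).symm
  · have : r / ENNReal.ofReal u ≠ ∞ := by simp [ENNReal.div_eq_top, hr, hu]
    rw [if_neg hr, if_neg this, ENNReal.toReal_div, ENNReal.toReal_ofReal hu.le]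
    simp_rw [← ENNReal.rpow_mul]
    congr 2
    · ext k
      congr 1
      field_simp
    · field_simp

lemma elrNorm_rpow_toReal (hr : r ≠ 0) (hr_top : r ≠ ∞) (a : ι → ℝ≥0∞) :
    elrNorm r a ^ r.toReal = ∑ k, a k ^ r.toReal := by
  rw [← elrNorm_rpow (ENNReal.toReal_pos hr hr_top), ofReal_toReal hr_top,
    ENNReal.div_self hr hr_top, elrNorm_one]

lemma elrNorm_const_mul (hr : r ≠ 0) (c : ℝ≥0∞) (a : ι → ℝ≥0∞) :
    elrNorm r (fun k => c * a k) = c * elrNorm r a := by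
  unfold elrNorm
  split
  · exact (ENNReal.mul_iSup c a).symm
  case isFalse hr_top =>
    have ht : 0 < r.toReal := ENNReal.toReal_pos hr hr_top
    simp_rw [ENNReal.mul_rpow_of_nonneg _ _ ht.le]
    rw [← Finset.mul_sum, ENNReal.mul_rpow_of_nonneg _ _ (by positivity), one_div,
      rpow_rpow_inv ht.ne']

lemma elrNorm_prod {α : Type*} [Fintype α] {κ : α → Type*} [∀ a, Fintype (κ a)] [DecidableEq α]
    (r : ℝ≥0∞) (a : ∀ i, κ i → ℝ≥0∞) :
    elrNorm r (fun k : ∀ i, κ i => ∏ i, a i (k i)) = ∏ i, elrNorm r (a i) := by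
  unfold elrNorm
  split
  · exact ENNReal.iSup_prod_eq_prod_iSup a
  · rw [ENNReal.prod_rpow_of_nonneg (by positivity), Finset.prod_univ_sum, Fintype.piFinset_univ]
    simp_rw [ENNReal.prod_rpow_of_nonneg ENNReal.toReal_nonneg]

lemma elrNorm_lintegral_le {Ω : Type*} [MeasurableSpace Ω] (μ : Measure Ω) (hr : 1 ≤ r)
    {h : ι → Ω → ℝ≥0∞} (hh : ∀ k, AEMeasurable (h k) μ) :
    elrNorm r (fun k => ∫⁻ x, h k x ∂μ) ≤ ∫⁻ x, elrNorm r (h · x) ∂μ := by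
  have hr0 : r ≠ 0 := (zero_lt_one.trans_le hr).ne'
  have hle : ∀ k, ∫⁻ x, h k x ∂μ ≤ ∫⁻ x, elrNorm r (h · x) ∂μ := fun k =>
    lintegral_mono fun x => le_elrNorm hr0 (h · x) k
  by_cases hr_top : r = ∞
  · simp only [elrNorm, hr_top, if_true] at hle ⊢
    exact iSup_le hle
  rcases hr.eq_or_lt with rfl | hr1
  · simp_rw [elrNorm_one]
    exact (lintegral_finsetSum' _ fun k _ => hh k).ge
  have ht : 1 < r.toReal := by simpa using ENNReal.toReal_strict_mono hr_top hr1
  have htt' : r.toReal.HolderConjugate r.toReal.conjExponent := .conjExponent ht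
  simp only [elrNorm, hr_top, if_false] at hle ⊢
  by_cases hS : ∑ k, (∫⁻ x, h k x ∂μ) ^ r.toReal = ∞
  · obtain ⟨k, -, hk⟩ := ENNReal.sum_eq_top.1 hS
    rw [ENNReal.rpow_eq_top_iff_of_pos (by positivity)] at hk
    have hI := hle k
    rw [hk, top_le_iff] at hI
    exact hI ▸ le_top
  exact ENNReal.rpow_one_div_le_of_le_rpow_mul htt' hS (sum_rpow_lintegral_le_mul htt' hh)

end elrNorm

lemma enorm_lrNorm {ι : Type} [Fintype ι] {r : ℝ≥0∞} (hr : r ≠ 0) (a : ι → ℝ) :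
    ‖lrNorm r a‖ₑ = elrNorm r fun k => ‖a k‖ₑ := by
  unfold lrNorm elrNorm
  simp_rw [Real.enorm_eq_ofReal_abs]
  split
  · cases isEmpty_or_nonempty ι
    · simp
    · rw [abs_of_nonneg (Real.iSup_nonneg fun k => abs_nonneg (a k))]
      exact ENNReal.ofReal_mono.map_ciSup_of_continuousAt ENNReal.continuous_ofReal.continuousAt
        (Finite.bddAbove_range _)
  case isFalse hr_top =>
    have ht : 0 < r.toReal := ENNReal.toReal_pos hr hr_top
    have hsum : 0 ≤ ∑ k, |a k| ^ r.toReal := by positivity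
    rw [abs_of_nonneg (by positivity), ← ENNReal.ofReal_rpow_of_nonneg hsum (by positivity),
      ENNReal.ofReal_sum_of_nonneg fun k _ => by positivity]
    simp_rw [ENNReal.ofReal_rpow_of_nonneg (abs_nonneg _) ht.le]

lemma eLpNorm_lrNorm_le_elrNorm {ι : Type} [Fintype ι] {Ω : Type*} [MeasurableSpace Ω]
    (ν : Measure Ω) {r p : ℝ≥0∞} (hr : r ≠ 0) (hrp : r ≤ p) {F : ι → Ω → ℝ}
    (hF : ∀ k, AEStronglyMeasurable (F k) ν) :
    eLpNorm (fun ω => lrNorm r (F · ω)) p ν ≤ elrNorm r fun k => eLpNorm (F k) p ν := by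
  by_cases hr_top : r = ∞
  · rw [hr_top, top_le_iff] at hrp
    rw [hrp, eLpNorm_exponent_top]
    refine eLpNormEssSup_le_of_ae_enorm_bound ?_
    filter_upwards [ae_all_iff.2 fun k => enorm_ae_le_eLpNormEssSup (F k) ν] with ω hω
    rw [enorm_lrNorm hr]
    exact elrNorm_mono fun k => (hω k).trans_eq eLpNorm_exponent_top.symm
  set t := r.toReal
  have ht : 0 < t := ENNReal.toReal_pos hr hr_top
  have hp_div : ∀ G : Ω → ℝ, eLpNorm (‖G ·‖ₑ ^ t) (p / r) ν = eLpNorm G p ν ^ t := fun G => by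
    rw [eLpNorm_enorm_rpow _ ht, ofReal_toReal hr_top, ENNReal.div_mul_cancel hr hr_top]
  have hp_div_one : 1 ≤ p / r := by
    rwa [ENNReal.le_div_iff_mul_le (Or.inl hr) (Or.inl hr_top), one_mul]
  rw [← ENNReal.rpow_le_rpow_iff ht, ← hp_div, elrNorm_rpow_toReal hr hr_top]
  calc eLpNorm (fun ω => ‖lrNorm r (F · ω)‖ₑ ^ t) (p / r) ν
      = eLpNorm (∑ k, fun ω => ‖F k ω‖ₑ ^ t) (p / r) ν := by
        congr 1
        ext ω
        rw [enorm_lrNorm hr, elrNorm_rpow_toReal hr hr_top, Finset.sum_apply]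
    _ ≤ ∑ k, eLpNorm (fun ω => ‖F k ω‖ₑ ^ t) (p / r) ν :=
        eLpNorm_sum_le (fun k _ => ((hF k).enorm.pow_const t).aestronglyMeasurable) hp_div_one
    _ = ∑ k, eLpNorm (F k) p ν ^ t := by simp_rw [hp_div]

lemma elrNorm_eLpNorm_le_eLpNorm_lrNorm {ι : Type} [Fintype ι] {Ω : Type*} [MeasurableSpace Ω]
    (μ : Measure Ω) {q r : ℝ≥0∞} (hq : q ≠ 0) (hqr : q ≤ r) {f : ι → Ω → ℝ}
    (hf : ∀ k, AEStronglyMeasurable (f k) μ) :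
    elrNorm r (fun k => eLpNorm (f k) q μ) ≤ eLpNorm (fun x => lrNorm r (f · x)) q μ := by
  have hr : r ≠ 0 := (pos_iff_ne_zero.2 hq |>.trans_le hqr).ne'
  by_cases hq_top : q = ∞
  · rw [hq_top, top_le_iff] at hqr
    unfold elrNorm
    rw [if_pos hqr]
    refine iSup_le fun k => eLpNorm_mono_enorm fun x => ?_
    rw [enorm_lrNorm hr]
    exact le_elrNorm hr _ k
  have hu : 0 < q.toReal := ENNReal.toReal_pos hq hq_top
  have hpow : ∀ g : Ω → ℝ, eLpNorm g q μ ^ q.toReal = ∫⁻ x, ‖g x‖ₑ ^ q.toReal ∂μ := fun g => by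
    rw [eLpNorm_eq_lintegral_rpow_enorm_toReal hq hq_top, one_div, rpow_inv_rpow hu.ne']
  have hrpow : ∀ a : ι → ℝ≥0∞,
      elrNorm (r / q) (fun k => a k ^ q.toReal) = elrNorm r a ^ q.toReal := by
    simpa only [ofReal_toReal hq_top] using elrNorm_rpow (r := r) hu
  have hrq : 1 ≤ r / q := by
    rwa [ENNReal.le_div_iff_mul_le (Or.inl hq) (Or.inl hq_top), one_mul]
  rw [← ENNReal.rpow_le_rpow_iff hu, ← hrpow, hpow]
  simp_rw [hpow]
  calc elrNorm (r / q) (fun k => ∫⁻ x, ‖f k x‖ₑ ^ q.toReal ∂μ)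
      ≤ ∫⁻ x, elrNorm (r / q) (fun k => ‖f k x‖ₑ ^ q.toReal) ∂μ :=
        elrNorm_lintegral_le μ hrq fun k => (hf k).enorm.pow_const _
    _ = ∫⁻ x, ‖lrNorm r (f · x)‖ₑ ^ q.toReal ∂μ := by simp_rw [hrpow, enorm_lrNorm hr]

/-- If `qᵢ ≤ r` for every `i` and `r ≤ p`, then the multilinear
Marcinkiewicz–Zygmund inequality at exponent `r` holds with constant `1`. -/
theorem statement7 (m : ℕ) (hm : 1 ≤ m) (q : Fin m → ℝ≥0∞) (hq : ∀ i, 1 ≤ q i)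
    (p r : ℝ≥0∞) (hqr : ∀ i, q i ≤ r) (hrp : r ≤ p) :
    MZprop m q p r 1 := by
  intro Ω _ μ _ Ω' _ ν _ T M _ hT n f hf
  have hq0 : ∀ i, q i ≠ 0 := fun i => (zero_lt_one.trans_le (hq i)).ne'
  have hr : r ≠ 0 := (pos_iff_ne_zero.2 (hq0 ⟨0, hm⟩)).trans_le (hqr ⟨0, hm⟩) |>.ne'
  have hfk : ∀ k : ∀ i, Fin (n i), ∀ i, MemLp (f i (k i)) (q i) (μ i) := fun k i => hf i (k i)
  rw [MZineq, one_mul]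
  calc eLpNorm (fun ω => lrNorm r fun k : ∀ i, Fin (n i) => T (fun i => f i (k i)) ω) p ν
      ≤ elrNorm r (fun k : ∀ i, Fin (n i) => eLpNorm (T fun i => f i (k i)) p ν) :=
        eLpNorm_lrNorm_le_elrNorm ν hr hrp fun k => (hT.memℒp _ (hfk k)).1
    _ ≤ elrNorm r (fun k : ∀ i, Fin (n i) =>
          ENNReal.ofReal M * ∏ i, eLpNorm (f i (k i)) (q i) (μ i)) :=
        elrNorm_mono fun k => hT.bound _ (hfk k)
    _ = ENNReal.ofReal M * ∏ i, elrNorm r (fun kᵢ => eLpNorm (f i kᵢ) (q i) (μ i)) := by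
        rw [elrNorm_const_mul hr, elrNorm_prod r fun i kᵢ => eLpNorm (f i kᵢ) (q i) (μ i)]
    _ ≤ ENNReal.ofReal M *
          ∏ i, eLpNorm (fun x => lrNorm r fun kᵢ : Fin (n i) => f i kᵢ x) (q i) (μ i) := by
        gcongr with i
        exact elrNorm_eLpNorm_le_eLpNorm_lrNorm (μ i) (hq0 i) (hqr i) fun kᵢ => (hf i kᵢ).1
end

section
/- Let 1 ≤ r < 4/3. Then for every constant C ≥ 0 there exist n ∈ ℕ and a bilinear form T : ℝⁿ × ℝⁿ → ℝ such that (∑_{i,j=1}^n |T(e_i, e_j)|^r)^{1/r} > C · sup{ |T(x,y)| : ‖x‖_{ℓ^∞} ≤ 1, ‖y‖_{ℓ^∞} ≤ 1 }, where e₁, …, e_n are the standard basis vectors of ℝⁿ and ‖·‖_{ℓ^∞} is the maximum norm on ℝⁿ. -/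
/-!
A Sylvester–Hadamard matrix `A` of order `N = 2 ^ k` has entries `±1`, so its entrywise `ℓʳ`
norm is `N ^ (2 / r)`. Its columns are orthogonal of length `√N`, so for `‖x‖_∞, ‖y‖_∞ ≤ 1`
Cauchy–Schwarz gives `|x ⬝ᵥ A *ᵥ y| ≤ √N ‖A *ᵥ y‖₂ = N ‖y‖₂ ≤ N ^ (3 / 2)`. Since `r < 4 / 3`
means `2 / r > 3 / 2`, the ratio `N ^ (2 / r - 3 / 2)` is unbounded.
-/

open Matrix

theorem Matrix.sq_dotProduct_mulVec_le_of_transpose_mul_self_eq_smul {m n : Type*} [Fintype m]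
    [Fintype n] [DecidableEq n] {A : Matrix m n ℝ} {c : ℝ} (hc : 0 ≤ c)
    (hA : Aᵀ * A = c • (1 : Matrix n n ℝ)) {x : m → ℝ} {y : n → ℝ}
    (hx : ∀ i, |x i| ≤ 1) (hy : ∀ j, |y j| ≤ 1) :
    (x ⬝ᵥ A *ᵥ y) ^ 2 ≤ Fintype.card m * c * Fintype.card n := by
  set w := A *ᵥ y
  have hw : w ⬝ᵥ w = c * (y ⬝ᵥ y) := by
    rw [dotProduct_mulVec, ← mulVec_transpose, mulVec_mulVec, hA, smul_mulVec, one_mulVec,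
      smul_dotProduct, smul_eq_mul]
  have hxw : |x ⬝ᵥ w| ≤ ∑ i, |w i| := by
    refine (Finset.abs_sum_le_sum_abs _ _).trans (Finset.sum_le_sum fun i _ => ?_)
    rw [abs_mul]
    exact mul_le_of_le_one_left (abs_nonneg _) (hx i)
  have hyy : y ⬝ᵥ y ≤ Fintype.card n := by
    calc y ⬝ᵥ y ≤ ∑ _j : n, (1 : ℝ) :=
          Finset.sum_le_sum fun j _ => by
            rw [← abs_mul_abs_self]; exact mul_le_one₀ (hy j) (abs_nonneg _) (hy j)
      _ = Fintype.card n := by simp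
  calc (x ⬝ᵥ w) ^ 2 = |x ⬝ᵥ w| ^ 2 := (sq_abs _).symm
    _ ≤ (∑ i, |w i|) ^ 2 := by gcongr
    _ ≤ Fintype.card m * ∑ i, |w i| ^ 2 := sq_sum_le_card_mul_sum_sq
    _ = Fintype.card m * (w ⬝ᵥ w) := by simp only [abs_mul_abs_self, sq, dotProduct]
    _ = Fintype.card m * c * (y ⬝ᵥ y) := by rw [hw, mul_assoc]
    _ ≤ Fintype.card m * c * Fintype.card n := by gcongr

theorem Matrix.isHadamard_fin_two : (!![1, 1; 1, -1] : Matrix (Fin 2) (Fin 2) ℝ).IsHadamard := by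
  refine ⟨fun i j => ?_, ?_, ?_⟩
  · fin_cases i <;> fin_cases j <;> simp [Unitary.mem_iff_eq_one_or_eq_neg_one]
  all_goals
    ext i j
    fin_cases i <;> fin_cases j <;> norm_num [Matrix.mul_apply, Fin.sum_univ_two]

theorem Matrix.exists_isHadamard_two_pow (k : ℕ) :
    ∃ A : Matrix (Fin (2 ^ k)) (Fin (2 ^ k)) ℝ, A.IsHadamard := by
  induction k with
  | zero => exact ⟨1, fun i j => by simp [one_apply, Subsingleton.elim (α := Fin 1) i j],
      by simp, by simp⟩
  | succ k ih =>
    obtain ⟨A, hA⟩ := ih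
    have e : Fin (2 ^ k) × Fin 2 ≃ Fin (2 ^ (k + 1)) :=
      finProdFinEquiv.trans (finCongr (pow_succ 2 k).symm)
    exact ⟨_, (hA.kronecker isHadamard_fin_two).reindex e e⟩

namespace Matrix.IsHadamard

variable {n : Type*} [Fintype n] [DecidableEq n] {A : Matrix n n ℝ}

theorem abs_apply_eq_one (hA : A.IsHadamard) (i j : n) : |A i j| = 1 := by
  rcases Unitary.mem_iff_eq_one_or_eq_neg_one.mp (hA.apply_mem i j) with h | h <;> simp [h]

theorem transpose_mul_self (hA : A.IsHadamard) : Aᵀ * A = (Fintype.card n : ℝ) • 1 := by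
  simpa [conjTranspose_eq_transpose_of_trivial] using hA.conjTranspose_mul

theorem entrywise_lpNorm_eq (hA : A.IsHadamard) (r : ℝ) :
    (∑ i, ∑ j, |A i j| ^ r) ^ (1 / r) = (Fintype.card n : ℝ) ^ (2 / r) := by
  simp only [hA.abs_apply_eq_one, Real.one_rpow, Finset.sum_const, Finset.card_univ, nsmul_eq_mul,
    mul_one]
  rw [← sq, ← Real.rpow_natCast, ← Real.rpow_mul (Nat.cast_nonneg _)]
  ring_nf

theorem abs_dotProduct_mulVec_le (hA : A.IsHadamard) {x y : n → ℝ}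
    (hx : ∀ i, |x i| ≤ 1) (hy : ∀ j, |y j| ≤ 1) :
    |x ⬝ᵥ A *ᵥ y| ≤ (Fintype.card n : ℝ) ^ (3 / 2 : ℝ) := by
  refine abs_le_of_sq_le_sq ?_ (by positivity)
  calc (x ⬝ᵥ A *ᵥ y) ^ 2 ≤ Fintype.card n * Fintype.card n * Fintype.card n :=
        sq_dotProduct_mulVec_le_of_transpose_mul_self_eq_smul (Nat.cast_nonneg _)
          hA.transpose_mul_self hx hy
    _ = ((Fintype.card n : ℝ) ^ (3 / 2 : ℝ)) ^ 2 := by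
        rw [← Real.rpow_natCast, ← Real.rpow_mul (Nat.cast_nonneg _)]; norm_num; ring

theorem iSup_abs_dotProduct_mulVec_le (hA : A.IsHadamard) :
    ⨆ z : {z : (n → ℝ) × (n → ℝ) // (∀ j, |z.1 j| ≤ 1) ∧ (∀ j, |z.2 j| ≤ 1)},
      |z.1.1 ⬝ᵥ A *ᵥ z.1.2| ≤ (Fintype.card n : ℝ) ^ (3 / 2 : ℝ) := by
  have : Nonempty {z : (n → ℝ) × (n → ℝ) // (∀ j, |z.1 j| ≤ 1) ∧ (∀ j, |z.2 j| ≤ 1)} :=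
    ⟨⟨0, fun _ => by simp, fun _ => by simp⟩⟩
  exact ciSup_le fun z => hA.abs_dotProduct_mulVec_le z.2.1 z.2.2

end Matrix.IsHadamard

/-- For `1 ≤ r < 4/3` and every `C ≥ 0` there are `n ∈ ℕ` and a bilinear form
`T : ℝⁿ × ℝⁿ → ℝ` with `(∑_{i,j} |T(eᵢ,eⱼ)|^r)^{1/r} > C · sup{|T(x,y)| : ‖x‖_∞,‖y‖_∞ ≤ 1}`. -/
theorem statement11 (r : ℝ) (hr1 : 1 ≤ r) (hr : r < 4 / 3) :
    ∀ C : ℝ, 0 ≤ C →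
      ∃ (n : ℕ) (T : (Fin n → ℝ) →ₗ[ℝ] (Fin n → ℝ) →ₗ[ℝ] ℝ),
        (∑ i : Fin n, ∑ j : Fin n, |T (Pi.single i 1) (Pi.single j 1)| ^ r) ^ (1 / r)
          > C * ⨆ z : {z : (Fin n → ℝ) × (Fin n → ℝ) //
                  (∀ j, |z.1 j| ≤ 1) ∧ (∀ j, |z.2 j| ≤ 1)},
                |T z.1.1 z.1.2| := by
  intro C hC
  have hgap : 0 < 2 / r - 3 / 2 := by
    rw [sub_pos, lt_div_iff₀ (by linarith)]; linarith
  obtain ⟨k, hk⟩ : ∃ k : ℕ, C < ((2 : ℝ) ^ k) ^ (2 / r - 3 / 2) :=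
    ((tendsto_rpow_atTop hgap).comp (tendsto_pow_atTop_atTop_of_one_lt one_lt_two)
      |>.eventually_gt_atTop C).exists
  obtain ⟨A, hA⟩ := exists_isHadamard_two_pow k
  refine ⟨2 ^ k, toLinearMap₂' ℝ A, ?_⟩
  -- `toLinearMap₂'_single` does not fire: its scalar ring is a separate implicit argument.
  simp only [toLinearMap₂'_apply', mulVec_single, MulOpposite.op_one, one_smul, single_dotProduct,
    col_apply, one_mul]
  rw [hA.entrywise_lpNorm_eq]
  refine (mul_le_mul_of_nonneg_left hA.iSup_abs_dotProduct_mulVec_le hC).trans_lt ?_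
  rw [Fintype.card_fin, Nat.cast_pow, Nat.cast_ofNat]
  calc C * ((2 : ℝ) ^ k) ^ (3 / 2 : ℝ)
      < ((2 : ℝ) ^ k) ^ (2 / r - 3 / 2) * ((2 : ℝ) ^ k) ^ (3 / 2 : ℝ) := by gcongr
    _ = ((2 : ℝ) ^ k) ^ (2 / r) := by rw [← Real.rpow_add (by positivity), sub_add_cancel]
end

section
/- Let m ≥ 1, let 1 ≤ q₁, …, q_m, p ≤ ∞ and 1 ≤ r < ∞. Suppose C ≥ 0 is a constant such that for all σ-finite measure spaces, every m-linear operator S : L^{q₁}(μ₁) × ⋯ × L^{q_m}(μ_m) → L^p(ν) bounded with norm at most M, and all finite families of functions in each slot, the Marcinkiewicz–Zygmund inequality at exponent r holds with constant C·M. Then for every such bounded m-linear operator T (norm at most M), every n ∈ ℕ, all functions {f^i_{kᵢ}}_{kᵢ=1}^{n} ⊂ L^{qᵢ}(μᵢ) and {g^i_{kᵢ}}_{kᵢ=1}^{n} ⊂ L^r[0,1] (i = 1, …, m, with Lebesgue measure on [0,1]), one has ‖( ∫₀¹⋯∫₀¹ | ∑_{k₁,…,k_m=1}^n T(f^1_{k₁},…,f^m_{k_m})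 g^1_{k₁}(t₁)⋯g^m_{k_m}(t_m) |^r dt₁⋯dt_m )^{1/r}‖_{L^p(ν)} ≤ C · M · ∏_{i=1}^m ‖( ∫₀¹ | ∑_{kᵢ=1}^n f^i_{kᵢ} g^i_{kᵢ}(tᵢ) |^r dtᵢ )^{1/r}‖_{L^{qᵢ}(μᵢ)}. -/
open MeasureTheory ENNReal Function

/-!
When every `g^i_k` is a simple function, `t ↦ (g^i_k(t))_k` takes finitely many values `v`, on
sets `A^i_v`. Then both sides are `ℓ^r`-sums over these values: with
`F^i_v := |A^i_v|^{1/r} ∑_k v_k f^i_k`, multilinearity expands `T(F^1_{v_1}, …, F^m_{v_m})`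
into the integrand on the left, so the inequality is the MZ inequality for the families `F^i`.
In general, both sides are `L^p`-norms of the `L^r`-valued functions
`ω ↦ ∑_k T(f_k)(ω) ⊗ᵢ g^i_{k_i}` and `x ↦ ∑_k f^i_k(x) g^i_k`; these depend continuously on
`(g^i_k) ∈ L^r`, since the tensor product is a bounded multilinear map. Simple functions are dense
in `L^r`, which finishes the proof.
-/

section LpNorm

variable {α : Type*} [MeasurableSpace α] {ρ : Measure α} {r : ℝ≥0∞} {κ : Type*} [Fintype κ]

theorem Lp.coeFn_sum_smul_ae_eq {G : κ → Lp ℝ r ρ} {g : κ → α → ℝ} (hG : ∀ k, ⇑(G k) =ᵐ[ρ] g k)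
    (d : κ → ℝ) : ⇑(∑ k, d k • G k) =ᵐ[ρ] fun t => ∑ k, d k * g k t := by
  filter_upwards [Lp.coeFn_fun_finsetSum Finset.univ fun k => d k • G k,
    ae_all_iff.2 fun k => Lp.coeFn_smul (d k) (G k), ae_all_iff.2 hG] with t hsum hsmul hg
  rw [hsum]
  exact Finset.sum_congr rfl fun k _ => by rw [hsmul k, Pi.smul_apply, hg k, smul_eq_mul]

theorem Lp.norm_sum_smul_eq_integral (hr0 : r ≠ 0) (hr : r ≠ ∞) {G : κ → Lp ℝ r ρ}
    {g : κ → α → ℝ} (hG : ∀ k, ⇑(G k) =ᵐ[ρ] g k) (d : κ → ℝ) :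
    ‖∑ k, d k • G k‖ = (∫ t, |∑ k, d k * g k t| ^ r.toReal ∂ρ) ^ (1 / r.toReal) := by
  have hsum := Lp.coeFn_sum_smul_ae_eq hG d
  rw [Lp.norm_def, eLpNorm_congr_ae hsum,
    MemLp.eLpNorm_eq_integral_rpow_norm hr0 hr ((Lp.memLp _).ae_eq hsum),
    ENNReal.toReal_ofReal (by positivity)]
  simp only [Real.norm_eq_abs, one_div]

theorem eLpNorm_sum_smul_eq_eLpNorm_integral [Fact (1 ≤ r)] (hr0 : r ≠ 0) (hr : r ≠ ∞)
    {Ω : Type*} [MeasurableSpace Ω] (ν : Measure Ω) (p : ℝ≥0∞) {G : κ → Lp ℝ r ρ}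
    {g : κ → α → ℝ} (hG : ∀ k, ⇑(G k) =ᵐ[ρ] g k) (c : κ → Ω → ℝ) :
    eLpNorm (fun x => ∑ k, c k x • G k) p ν
      = eLpNorm (fun x => (∫ t, |∑ k, c k x * g k t| ^ r.toReal ∂ρ) ^ (1 / r.toReal)) p ν := by
  rw [← eLpNorm_norm]
  simp only [Lp.norm_sum_smul_eq_integral hr0 hr hG]

end LpNorm

section SumSMul

variable {Ω : Type*} [MeasurableSpace Ω] {ν : Measure Ω} {p : ℝ≥0∞} {κ : Type*} [Fintype κ]
  {E : Type*} [NormedAddCommGroup E] [NormedSpace ℝ E]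

theorem eLpNorm_sum_smul_le (hp : 1 ≤ p) {c : κ → Ω → ℝ}
    (hc : ∀ k, AEStronglyMeasurable (c k) ν) (u : κ → E) :
    eLpNorm (fun ω => ∑ k, c k ω • u k) p ν ≤ ∑ k, ‖u k‖ₑ * eLpNorm (c k) p ν := by
  have : (fun ω => ∑ k, c k ω • u k) = ∑ k, fun ω => c k ω • u k := by
    ext ω
    simp [Finset.sum_apply]
  rw [this]
  refine (eLpNorm_sum_le (fun k _ => (hc k).smul_const (u k)) hp).trans
    (Finset.sum_le_sum fun k _ => eLpNorm_le_mul_eLpNorm_of_ae_le_mul'' p (hc k) ?_)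
  exact ae_of_all _ fun ω => by rw [enorm_smul, mul_comm]

theorem continuous_eLpNorm_sum_smul (hp : 1 ≤ p) {c : κ → Ω → ℝ}
    (hc : ∀ k, MemLp (c k) p ν) :
    Continuous fun u : κ → E => eLpNorm (fun ω => ∑ k, c k ω • u k) p ν := by
  have hmeas (u : κ → E) : AEStronglyMeasurable (fun ω => ∑ k, c k ω • u k) ν :=
    Finset.aestronglyMeasurable_fun_sum _ fun k _ => (hc k).1.smul_const (u k)
  refine continuous_of_le_add_edist (∑ k, eLpNorm (c k) p ν)
    (ENNReal.sum_ne_top.2 fun k _ => (hc k).eLpNorm_ne_top) fun u w => ?_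
  calc eLpNorm (fun ω => ∑ k, c k ω • u k) p ν
      ≤ eLpNorm (fun ω => ∑ k, c k ω • w k) p ν
        + eLpNorm (fun ω => ∑ k, c k ω • (u - w) k) p ν := by
        have : (fun ω => ∑ k, c k ω • u k)
            = (fun ω => ∑ k, c k ω • w k) + fun ω => ∑ k, c k ω • (u - w) k := by
          ext ω
          simp [smul_sub, Finset.sum_sub_distrib]
        rw [this]
        exact eLpNorm_add_le (hmeas w) (hmeas (u - w)) hp
    _ ≤ eLpNorm (fun ω => ∑ k, c k ω • w k) p ν
        + ∑ k, ‖(u - w) k‖ₑ * eLpNorm (c k) p ν := by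
        gcongr
        exact eLpNorm_sum_smul_le hp (fun k => (hc k).1) (u - w)
    _ ≤ eLpNorm (fun ω => ∑ k, c k ω • w k) p ν + (∑ k, eLpNorm (c k) p ν) * edist u w := by
        rw [Finset.sum_mul]
        refine add_le_add le_rfl (Finset.sum_le_sum fun k _ => ?_)
        rw [mul_comm (eLpNorm _ _ _), Pi.sub_apply, ← edist_eq_enorm_sub]
        gcongr
        exact edist_le_pi_edist u w k

end SumSMul

theorem integral_comp_of_fintype {X ι : Type*} [MeasurableSpace X] [Fintype ι]
    [MeasurableSpace ι] [MeasurableSingletonClass ι] (ρ : Measure X) [IsFiniteMeasure ρ]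
    {V : X → ι} (hV : Measurable V) (φ : ι → ℝ) :
    ∫ t, φ (V t) ∂ρ = ∑ v, ρ.real (V ⁻¹' {v}) * φ v := by
  rw [← integral_map hV.aemeasurable (Measurable.of_discrete).aestronglyMeasurable,
    integral_fintype Integrable.of_finite]
  exact Finset.sum_congr rfl fun v _ => by
    rw [map_measureReal_apply hV (measurableSet_singleton v), smul_eq_mul]

theorem integral_pi_comp_of_fintype {ι : Type*} [Fintype ι] [DecidableEq ι] {X κ : ι → Type*}
    [∀ i, MeasurableSpace (X i)] [∀ i, Fintype (κ i)] [∀ i, MeasurableSpace (κ i)]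
    [∀ i, MeasurableSingletonClass (κ i)] (ρ : ∀ i, Measure (X i)) [∀ i, IsFiniteMeasure (ρ i)]
    {V : ∀ i, X i → κ i} (hV : ∀ i, Measurable (V i)) (φ : (∀ i, κ i) → ℝ) :
    ∫ t, φ (fun i => V i (t i)) ∂Measure.pi ρ
      = ∑ v : ∀ i, κ i, (∏ i, (ρ i).real (V i ⁻¹' {v i})) * φ v := by
  rw [integral_comp_of_fintype _ (V := fun (t : ∀ i, X i) i => V i (t i)) (by fun_prop)]
  refine Finset.sum_congr rfl fun v _ => ?_
  have : (fun t : ∀ i, X i => fun i => V i (t i)) ⁻¹' {v} = Set.univ.pi fun i => V i ⁻¹' {v i} := by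
    ext t
    simp [funext_iff]
  rw [this, measureReal_def, Measure.pi_pi, ENNReal.toReal_prod]
  rfl

section PiTensor

variable {ι : Type*} [Fintype ι] {X : ι → Type*} [∀ i, MeasurableSpace (X i)]
  (μ : ∀ i, Measure (X i)) {r : ℝ≥0∞}

theorem Lp.prod_update_apply [DecidableEq ι] (G : ∀ i, Lp ℝ r (μ i)) (j : ι)
    (z : Lp ℝ r (μ j)) (t : ∀ i, X i) :
    ∏ i, update G j z i (t i) = z (t j) * ∏ i ∈ Finset.univ.erase j, G i (t i) := by
  rw [← Finset.mul_prod_erase _ _ (Finset.mem_univ j), update_self]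
  congr 1
  exact Finset.prod_congr rfl fun i hi => by rw [update_of_ne (Finset.ne_of_mem_erase hi)]

variable [∀ i, SigmaFinite (μ i)]

theorem memLp_pi_prod (hr0 : r ≠ 0) (hr : r ≠ ∞) {φ : ∀ i, X i → ℝ}
    (hφ : ∀ i, MemLp (φ i) r (μ i)) :
    MemLp (fun t => ∏ i, φ i (t i)) r (Measure.pi μ) := by
  have hmeas : AEStronglyMeasurable (fun t => ∏ i, φ i (t i)) (Measure.pi μ) :=
    Finset.aestronglyMeasurable_fun_prod _ fun i _ =>
      (hφ i).1.comp_quasiMeasurePreserving (Measure.quasiMeasurePreserving_eval μ i)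
  refine (integrable_norm_rpow_iff hmeas hr0 hr).1 ?_
  simp_rw [norm_prod, ← Real.finsetProd_rpow _ _ fun i _ => norm_nonneg _]
  exact Integrable.fintype_prod_dep fun i => (hφ i).integrable_norm_rpow hr0 hr

theorem eLpNorm_pi_prod (hr0 : r ≠ 0) (hr : r ≠ ∞) {φ : ∀ i, X i → ℝ}
    (hφ : ∀ i, MemLp (φ i) r (μ i)) :
    eLpNorm (fun t => ∏ i, φ i (t i)) r (Measure.pi μ) = ∏ i, eLpNorm (φ i) r (μ i) := by
  rw [MemLp.eLpNorm_eq_integral_rpow_norm hr0 hr (memLp_pi_prod μ hr0 hr hφ),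
    Finset.prod_congr rfl fun i _ => MemLp.eLpNorm_eq_integral_rpow_norm hr0 hr (hφ i)]
  simp_rw [norm_prod, ← Real.finsetProd_rpow _ _ fun i _ => norm_nonneg _]
  rw [integral_fintype_prod_eq_prod fun i y => ‖φ i y‖ ^ r.toReal,
    ← Real.finsetProd_rpow _ _ fun i _ => integral_nonneg fun _ => by positivity,
    ENNReal.ofReal_prod_of_nonneg fun i _ => by positivity]

noncomputable def Lp.piTensor [Fact (1 ≤ r)] (hr : r ≠ ∞) :
    ContinuousMultilinearMap ℝ (fun i => Lp ℝ r (μ i)) (Lp ℝ r (Measure.pi μ)) :=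
  have hr0 : r ≠ 0 := (zero_lt_one.trans_le Fact.out).ne'
  MultilinearMap.mkContinuous
    { toFun G := (memLp_pi_prod μ hr0 hr fun i => Lp.memLp (G i)).toLp _
      map_update_add' G j x y := by
        rw [← MemLp.toLp_add, MemLp.toLp_eq_toLp_iff]
        filter_upwards [(Measure.quasiMeasurePreserving_eval μ j).ae_eq (Lp.coeFn_add x y)]
          with t ht
        simp only [Pi.add_apply, Lp.prod_update_apply]
        rw [show ⇑(x + y) (t j) = x (t j) + y (t j) from ht, add_mul]
      map_update_smul' G j c x := by
        rw [← MemLp.toLp_const_smul, MemLp.toLp_eq_toLp_iff]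
        filter_upwards [(Measure.quasiMeasurePreserving_eval μ j).ae_eq (Lp.coeFn_smul c x)]
          with t ht
        simp only [Pi.smul_apply, Lp.prod_update_apply, smul_eq_mul]
        rw [show ⇑(c • x) (t j) = c * x (t j) from ht, mul_assoc] }
    1 fun G => by
      simp only [MultilinearMap.coe_mk]
      rw [Lp.norm_toLp, eLpNorm_pi_prod μ hr0 hr fun i => Lp.memLp (G i), ENNReal.toReal_prod,
        one_mul]
      exact le_of_eq (Finset.prod_congr rfl fun i _ => (Lp.norm_def _).symm)

theorem Lp.coeFn_piTensor [Fact (1 ≤ r)] (hr : r ≠ ∞) {G : ∀ i, Lp ℝ r (μ i)}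
    {φ : ∀ i, X i → ℝ} (hG : ∀ i, ⇑(G i) =ᵐ[μ i] φ i) :
    ⇑(Lp.piTensor μ hr G) =ᵐ[Measure.pi μ] fun t => ∏ i, φ i (t i) := by
  simp only [Lp.piTensor, MultilinearMap.coe_mkContinuous, MultilinearMap.coe_mk]
  refine (MemLp.coeFn_toLp _).trans ?_
  filter_upwards [ae_all_iff.2 fun i =>
    (Measure.quasiMeasurePreserving_eval μ i).ae_eq (hG i)] with t hφ
  exact Finset.prod_congr rfl fun i _ => hφ i

end PiTensor

theorem Real.abs_rpow_one_div_mul_rpow {ρ : ℝ} (hρ : 0 ≤ ρ) {r : ℝ} (hr : r ≠ 0) (s : ℝ) :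
    |ρ ^ (1 / r) * s| ^ r = ρ * |s| ^ r := by
  rw [abs_mul, abs_of_nonneg (Real.rpow_nonneg hρ _),
    Real.mul_rpow (Real.rpow_nonneg hρ _) (abs_nonneg _), ← Real.rpow_mul hρ,
    one_div_mul_cancel hr, Real.rpow_one]

theorem lrNorm_of_ne_top {ι : Type} [Fintype ι] {r : ℝ≥0∞} (hr : r ≠ ∞) (a : ι → ℝ) :
    lrNorm r a = (∑ k, |a k| ^ r.toReal) ^ (1 / r.toReal) :=
  if_neg hr

theorem lrNorm_comp_equiv {ι κ : Type} [Fintype ι] [Fintype κ] (r : ℝ≥0∞) (e : ι ≃ κ)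
    (a : κ → ℝ) : lrNorm r (fun k => a (e k)) = lrNorm r a := by
  unfold lrNorm
  split_ifs
  · exact e.iSup_comp (g := fun k => |a k|)
  · rw [e.sum_comp (fun k => |a k| ^ r.toReal)]

theorem Lp.coeFn_update {ι : Type*} [DecidableEq ι] {X : ι → Type*} [∀ i, MeasurableSpace (X i)]
    {μ : ∀ i, Measure (X i)} {r : ι → ℝ≥0∞} (F : ∀ i, Lp ℝ (r i) (μ i)) (i : ι)
    (G : Lp ℝ (r i) (μ i)) : (fun j => ⇑(update F i G j)) = update (fun j => ⇑(F j)) i ⇑G := by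
  ext j : 1
  rcases eq_or_ne j i with rfl | h <;> simp [*]

theorem memLp_update {ι : Type*} [DecidableEq ι] {X : ι → Type*} [∀ i, MeasurableSpace (X i)]
    {μ : ∀ i, Measure (X i)} {q : ι → ℝ≥0∞} {f : ∀ i, X i → ℝ}
    (hf : ∀ j, MemLp (f j) (q j) (μ j)) {i : ι} {g : X i → ℝ} (hg : MemLp g (q i) (μ i))
    (j : ι) : MemLp (update f i g j) (q j) (μ j) :=
  (forall_update_iff f (p := fun j φ => MemLp φ (q j) (μ j))).2 ⟨hg, fun j _ => hf j⟩ j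

namespace IsBddMultilinear

variable {m : ℕ} {Ω : Fin m → Type} [∀ i, MeasurableSpace (Ω i)] {μ : ∀ i, Measure (Ω i)}
  {Ω' : Type} [MeasurableSpace Ω'] {ν : Measure Ω'} {q : Fin m → ℝ≥0∞} {p : ℝ≥0∞}
  {T : (∀ i, Ω i → ℝ) → Ω' → ℝ} {M : ℝ}

theorem apply_update_zero (hT : IsBddMultilinear μ ν q p T M) (f : ∀ i, Ω i → ℝ)
    (hf : ∀ j, MemLp (f j) (q j) (μ j)) (i : Fin m) :
    T (update f i 0) =ᵐ[ν] 0 := by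
  have h := hT.multilinear f hf i 1 0 0 MemLp.zero MemLp.zero
  have h0 : (fun x => (1 : ℝ) * (0 : Ω i → ℝ) x + (0 : Ω i → ℝ) x) = 0 := by ext; simp
  rw [h0] at h
  filter_upwards [h] with ω hω
  rw [Pi.zero_apply]
  linarith

noncomputable def toMultilinearMap (hT : IsBddMultilinear μ ν q p T M) :
    MultilinearMap ℝ (fun i => Lp ℝ (q i) (μ i)) (Lp ℝ p ν) where
  toFun F := (hT.memℒp (fun i => F i) fun i => Lp.memLp (F i)).toLp _
  map_update_add' := by
    intro _ F i x y
    obtain rfl : ‹DecidableEq (Fin m)› = instDecidableEqFin m := Subsingleton.elim _ _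
    rw [← MemLp.toLp_add, MemLp.toLp_eq_toLp_iff]
    simp only [Lp.coeFn_update]
    have hF j := Lp.memLp (F j)
    refine (hT.congr _ (update (fun j => ⇑(F j)) i fun t => 1 * x t + y t)
      (memLp_update hF (Lp.memLp _))
      (memLp_update hF (((Lp.memLp x).const_mul 1).add (Lp.memLp y)))
      fun j => ?_).trans ?_
    · rcases eq_or_ne j i with rfl | h
      · simp only [update_self, one_mul]
        exact Lp.coeFn_add x y
      · simp [h]
    · filter_upwards [hT.multilinear _ hF i 1 x y (Lp.memLp x) (Lp.memLp y)] with ω hω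
      simpa using hω
  map_update_smul' := by
    intro _ F i c x
    obtain rfl : ‹DecidableEq (Fin m)› = instDecidableEqFin m := Subsingleton.elim _ _
    rw [← MemLp.toLp_const_smul, MemLp.toLp_eq_toLp_iff]
    simp only [Lp.coeFn_update]
    have hF j := Lp.memLp (F j)
    refine (hT.congr _ (update (fun j => ⇑(F j)) i fun t => c * x t + 0)
      (memLp_update hF (Lp.memLp _))
      (memLp_update hF (((Lp.memLp x).const_mul c).add MemLp.zero))
      fun j => ?_).trans ?_
    · rcases eq_or_ne j i with rfl | h
      · simp only [update_self, add_zero]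
        exact Lp.coeFn_smul c x
      · simp [h]
    · filter_upwards [hT.multilinear _ hF i c x 0 (Lp.memLp x) MemLp.zero,
        hT.apply_update_zero _ hF i] with ω hω h0
      simp_all

theorem toMultilinearMap_ae_eq (hT : IsBddMultilinear μ ν q p T M)
    {F : ∀ i, Lp ℝ (q i) (μ i)} {f : ∀ i, Ω i → ℝ} (hf : ∀ i, MemLp (f i) (q i) (μ i))
    (hFf : ∀ i, ⇑(F i) =ᵐ[μ i] f i) : ⇑(hT.toMultilinearMap F) =ᵐ[ν] T f :=
  (hT.memℒp _ fun i => Lp.memLp (F i)).coeFn_toLp.trans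
    (hT.congr _ _ (fun i => Lp.memLp (F i)) hf hFf)

theorem map_sum_mul (hT : IsBddMultilinear μ ν q p T M) {κ : Fin m → Type*}
    [∀ i, Fintype (κ i)] (f : ∀ i, κ i → Ω i → ℝ) (hf : ∀ i k, MemLp (f i k) (q i) (μ i))
    (a : ∀ i, κ i → ℝ) :
    T (fun i x => ∑ k, a i k * f i k x) =ᵐ[ν]
      fun ω => ∑ k : ∀ i, κ i, (∏ i, a i (k i)) * T (fun i => f i (k i)) ω := by
  have hF i k : ⇑((hf i k).toLp (f i k)) =ᵐ[μ i] f i k := (hf i k).coeFn_toLp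
  calc T (fun i x => ∑ k, a i k * f i k x)
      =ᵐ[ν] ⇑(hT.toMultilinearMap fun i => ∑ k, a i k • (hf i k).toLp (f i k)) :=
        (hT.toMultilinearMap_ae_eq
          (fun i => memLp_finsetSum _ fun k _ => (hf i k).const_mul (a i k))
          fun i => Lp.coeFn_sum_smul_ae_eq (hF i) (a i)).symm
    _ = ⇑(∑ k : ∀ i, κ i, (∏ i, a i (k i)) •
          hT.toMultilinearMap fun i => (hf i (k i)).toLp (f i (k i))) := by
        rw [MultilinearMap.map_sum]
        simp_rw [MultilinearMap.map_smul_univ]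
    _ =ᵐ[ν] _ := Lp.coeFn_sum_smul_ae_eq
        (fun k => hT.toMultilinearMap_ae_eq (fun i => hf i (k i)) fun i => hF i (k i)) _

end IsBddMultilinear

namespace MZprop

variable {m : ℕ} {q : Fin m → ℝ≥0∞} {p r : ℝ≥0∞} {C : ℝ}
  {Ω : Fin m → Type} [∀ i, MeasurableSpace (Ω i)] {μ : ∀ i, Measure (Ω i)} [∀ i, SigmaFinite (μ i)]
  {Ω' : Type} [MeasurableSpace Ω'] {ν : Measure Ω'} [SigmaFinite ν]
  {T : (∀ i, Ω i → ℝ) → Ω' → ℝ} {M : ℝ}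

theorem eLpNorm_lrNorm_le (hMZ : MZprop m q p r C) (hM : 0 ≤ M)
    (hT : IsBddMultilinear μ ν q p T M) {ι : Fin m → Type} [∀ i, Fintype (ι i)]
    (F : ∀ i, ι i → Ω i → ℝ) (hF : ∀ i v, MemLp (F i v) (q i) (μ i)) :
    eLpNorm (fun ω => lrNorm r fun v : ∀ i, ι i => T (fun i => F i (v i)) ω) p ν
      ≤ ENNReal.ofReal (C * M) *
        ∏ i, eLpNorm (fun x => lrNorm r fun v : ι i => F i v x) (q i) (μ i) := by
  let e i : Fin (Fintype.card (ι i)) ≃ ι i := (Fintype.equivFin (ι i)).symm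
  have hL ω : lrNorm r (fun v : ∀ i, ι i => T (fun i => F i (v i)) ω)
      = lrNorm r fun k : ∀ i, Fin (Fintype.card (ι i)) => T (fun i => F i (e i (k i))) ω :=
    (lrNorm_comp_equiv r (Equiv.piCongrRight e) _).symm
  have hR i x : lrNorm r (fun v : ι i => F i v x) = lrNorm r fun j => F i (e i j) x :=
    (lrNorm_comp_equiv r (e i) _).symm
  simp only [hL, hR]
  exact hMZ Ω μ Ω' ν T M hM hT _ (fun i j => F i (e i j)) fun i j => hF i (e i j)

theorem eLpNorm_weighted_le (hMZ : MZprop m q p r C) (hr0 : r ≠ 0) (hr : r ≠ ∞) (hM : 0 ≤ M)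
    (hT : IsBddMultilinear μ ν q p T M) {κ : Fin m → Type*} [∀ i, Fintype (κ i)]
    (f : ∀ i, κ i → Ω i → ℝ) (hf : ∀ i k, MemLp (f i k) (q i) (μ i))
    {ι : Fin m → Type} [∀ i, Fintype (ι i)] (ρ : ∀ i, ι i → ℝ) (hρ : ∀ i v, 0 ≤ ρ i v)
    (a : ∀ i, ι i → κ i → ℝ) :
    eLpNorm (fun ω => (∑ v : ∀ i, ι i, (∏ i, ρ i (v i)) *
        |∑ k : ∀ i, κ i, T (fun i => f i (k i)) ω * ∏ i, a i (v i) (k i)| ^ r.toReal)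
          ^ (1 / r.toReal)) p ν
      ≤ ENNReal.ofReal (C * M) * ∏ i, eLpNorm (fun x => (∑ v, ρ i v *
          |∑ k, f i k x * a i v k| ^ r.toReal) ^ (1 / r.toReal)) (q i) (μ i) := by
  have hr' : r.toReal ≠ 0 := (ENNReal.toReal_pos hr0 hr).ne'
  -- the weights are absorbed into the families, since `|ρ ^ (1/r) * s| ^ r = ρ * |s| ^ r`
  let F i v x := ∑ k, (ρ i v ^ (1 / r.toReal) * a i v k) * f i k x
  have hF i v : MemLp (F i v) (q i) (μ i) :=
    memLp_finsetSum _ fun k _ => (hf i k).const_mul _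
  have hR i x : (∑ v, ρ i v * |∑ k, f i k x * a i v k| ^ r.toReal) ^ (1 / r.toReal)
      = lrNorm r fun v => F i v x := by
    rw [lrNorm_of_ne_top hr]
    refine congrArg (· ^ _) (Finset.sum_congr rfl fun v _ => ?_)
    have : F i v x = ρ i v ^ (1 / r.toReal) * ∑ k, f i k x * a i v k := by
      simp only [F, Finset.mul_sum]
      exact Finset.sum_congr rfl fun k _ => by ring
    rw [this, Real.abs_rpow_one_div_mul_rpow (hρ i v) hr']
  have hL : (fun ω => (∑ v : ∀ i, ι i, (∏ i, ρ i (v i)) *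
        |∑ k : ∀ i, κ i, T (fun i => f i (k i)) ω * ∏ i, a i (v i) (k i)| ^ r.toReal)
          ^ (1 / r.toReal))
      =ᵐ[ν] fun ω => lrNorm r fun v : ∀ i, ι i => T (fun i => F i (v i)) ω := by
    filter_upwards [ae_all_iff.2 fun v : ∀ i, ι i =>
      hT.map_sum_mul f hf fun i k => ρ i (v i) ^ (1 / r.toReal) * a i (v i) k] with ω hω
    rw [lrNorm_of_ne_top hr]
    refine congrArg (· ^ _) (Finset.sum_congr rfl fun v _ => ?_)
    have hρv : 0 ≤ ∏ i, ρ i (v i) := Finset.prod_nonneg fun i _ => hρ i (v i)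
    have : T (fun i => F i (v i)) ω = (∏ i, ρ i (v i)) ^ (1 / r.toReal) *
        ∑ k : ∀ i, κ i, T (fun i => f i (k i)) ω * ∏ i, a i (v i) (k i) := by
      rw [hω v, Finset.mul_sum, ← Real.finsetProd_rpow _ _ fun i _ => hρ i (v i)]
      exact Finset.sum_congr rfl fun k _ => by rw [Finset.prod_mul_distrib]; ring
    rw [this, Real.abs_rpow_one_div_mul_rpow hρv hr']
  rw [eLpNorm_congr_ae hL]
  simp only [hR]
  exact hMZ.eLpNorm_lrNorm_le hM hT F hF

theorem eLpNorm_integral_simpleFunc_le (hMZ : MZprop m q p r C) (hr0 : r ≠ 0) (hr : r ≠ ∞)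
    (hM : 0 ≤ M) (hT : IsBddMultilinear μ ν q p T M) {κ : Fin m → Type} [∀ i, Fintype (κ i)]
    (f : ∀ i, κ i → Ω i → ℝ) (hf : ∀ i k, MemLp (f i k) (q i) (μ i))
    {X : Fin m → Type*} [∀ i, MeasurableSpace (X i)] (ρ : ∀ i, Measure (X i))
    [∀ i, IsFiniteMeasure (ρ i)] (s : ∀ i, κ i → SimpleFunc (X i) ℝ) :
    eLpNorm (fun ω => (∫ t, |∑ k : ∀ i, κ i,
        T (fun i => f i (k i)) ω * ∏ i, s i (k i) (t i)| ^ r.toReal ∂Measure.pi ρ)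
          ^ (1 / r.toReal)) p ν
      ≤ ENNReal.ofReal (C * M) * ∏ i, eLpNorm (fun x =>
          (∫ t, |∑ k, f i k x * s i k t| ^ r.toReal ∂ρ i) ^ (1 / r.toReal)) (q i) (μ i) := by
  classical
  -- `t ↦ (s i k t)ₖ` takes finitely many values, which index the weighted `ℓ^r`-sums
  let J i : Finset (κ i → ℝ) := Fintype.piFinset fun k => (s i k).range
  let V i (t : X i) : J i :=
    ⟨fun k => s i k t, Fintype.mem_piFinset.2 fun k => (s i k).mem_range_self t⟩
  have hV i : Measurable (V i) :=
    (measurable_pi_lambda _ fun k => (s i k).measurable).subtype_mk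
  have hL ω : ∫ t, |∑ k : ∀ i, κ i,
        T (fun i => f i (k i)) ω * ∏ i, s i (k i) (t i)| ^ r.toReal ∂Measure.pi ρ
      = ∑ v : ∀ i, J i, (∏ i, (ρ i).real (V i ⁻¹' {v i})) *
        |∑ k : ∀ i, κ i, T (fun i => f i (k i)) ω * ∏ i, (v i : κ i → ℝ) (k i)| ^ r.toReal :=
    integral_pi_comp_of_fintype ρ hV fun v => |∑ k : ∀ i, κ i,
        T (fun i => f i (k i)) ω * ∏ i, (v i : κ i → ℝ) (k i)| ^ r.toReal
  have hR i x : ∫ t, |∑ k, f i k x * s i k t| ^ r.toReal ∂ρ i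
      = ∑ v, (ρ i).real (V i ⁻¹' {v}) * |∑ k, f i k x * (v : κ i → ℝ) k| ^ r.toReal :=
    integral_comp_of_fintype (ρ i) (hV i) fun v => |∑ k, f i k x * (v : κ i → ℝ) k| ^ r.toReal
  simp only [hL, hR]
  exact hMZ.eLpNorm_weighted_le hr0 hr hM hT f hf (fun i v => (ρ i).real (V i ⁻¹' {v}))
    (fun _ _ => measureReal_nonneg) fun i v => v

theorem eLpNorm_sum_smul_piTensor_le (hMZ : MZprop m q p r C) [Fact (1 ≤ r)] (hr : r ≠ ∞)
    (hp : 1 ≤ p) (hq : ∀ i, 1 ≤ q i) (hM : 0 ≤ M) (hT : IsBddMultilinear μ ν q p T M)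
    {κ : Fin m → Type} [∀ i, Fintype (κ i)]
    (f : ∀ i, κ i → Ω i → ℝ) (hf : ∀ i k, MemLp (f i k) (q i) (μ i))
    {X : Fin m → Type*} [∀ i, MeasurableSpace (X i)] (ρ : ∀ i, Measure (X i))
    [∀ i, IsFiniteMeasure (ρ i)] (G : ∀ i, κ i → Lp ℝ r (ρ i)) :
    eLpNorm (fun ω => ∑ k : ∀ i, κ i,
        T (fun i => f i (k i)) ω • Lp.piTensor ρ hr fun i => G i (k i)) p ν
      ≤ ENNReal.ofReal (C * M) * ∏ i, eLpNorm (fun x => ∑ k, f i k x • G i k) (q i) (μ i) := by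
  have hr0 : r ≠ 0 := (zero_lt_one.trans_le Fact.out).ne'
  have hR i : Continuous fun H : κ i → Lp ℝ r (ρ i) =>
      eLpNorm (fun x => ∑ k, f i k x • H k) (q i) (μ i) :=
    continuous_eLpNorm_sum_smul (hq i) (hf i)
  have hR_ne_top i (H : κ i → Lp ℝ r (ρ i)) :
      eLpNorm (fun x => ∑ k, f i k x • H k) (q i) (μ i) ≠ ∞ :=
    ((eLpNorm_sum_smul_le (hq i) (fun k => (hf i k).1) H).trans_lt
      (ENNReal.sum_lt_top.2 fun k _ => ENNReal.mul_lt_top enorm_lt_top (hf i k).2)).ne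
  refine (DenseRange.piMap fun i => DenseRange.piMap fun k =>
    Lp.simpleFunc.denseRange hr).induction_on G (isClosed_le ?_ ?_) fun s => ?_
  · have hL : Continuous fun G : ∀ i, κ i → Lp ℝ r (ρ i) =>
        fun k : ∀ i, κ i => Lp.piTensor ρ hr fun i => G i (k i) :=
      continuous_pi fun k => (Lp.piTensor ρ hr).cont.comp
        (continuous_pi fun i => (continuous_apply (k i)).comp (continuous_apply i))
    have h1 : Continuous fun u : (∀ i, κ i) → Lp ℝ r (Measure.pi ρ) =>
        eLpNorm (fun ω => ∑ k, T (fun i => f i (k i)) ω • u k) p ν :=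
      continuous_eLpNorm_sum_smul hp fun k => hT.memℒp _ fun i => hf i (k i)
    exact h1.comp hL
  · refine (ENNReal.continuous_const_mul ofReal_ne_top).comp
      (continuous_iff_continuousAt.2 fun G => ENNReal.tendsto_finsetProd_of_ne_top _
        (fun i _ => ((hR i).comp (continuous_apply i)).continuousAt)
        fun i _ => hR_ne_top i (G i))
  · simp only [Pi.map_apply]
    let σ i k := Lp.simpleFunc.toSimpleFunc (s i k)
    have hσ i k : ⇑(s i k : Lp ℝ r (ρ i)) =ᵐ[ρ i] σ i k :=
      (Lp.simpleFunc.toSimpleFunc_eq_toFun _).symm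
    rw [eLpNorm_sum_smul_eq_eLpNorm_integral hr0 hr ν p
        (fun k : ∀ i, κ i => Lp.coeFn_piTensor ρ hr fun i => hσ i (k i)),
      Finset.prod_congr rfl fun i _ =>
        eLpNorm_sum_smul_eq_eLpNorm_integral hr0 hr (μ i) (q i) (hσ i) (f i)]
    exact hMZ.eLpNorm_integral_simpleFunc_le hr0 hr hM hT f hf ρ σ

end MZprop

theorem statement13_general (m : ℕ) (q : Fin m → ℝ≥0∞) (hq : ∀ i, 1 ≤ q i)
    (p : ℝ≥0∞) (hp : 1 ≤ p) (r : ℝ≥0∞) (hr1 : 1 ≤ r) (hr2 : r ≠ ∞)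
    (C : ℝ) (hMZ : MZprop m q p r C) :
    ∀ (Ω : Fin m → Type) [∀ i, MeasurableSpace (Ω i)] (μ : ∀ i, Measure (Ω i))
      [∀ i, SigmaFinite (μ i)]
      (Ω' : Type) [MeasurableSpace Ω'] (ν : Measure Ω') [SigmaFinite ν]
      (T : (∀ i, Ω i → ℝ) → Ω' → ℝ) (M : ℝ), 0 ≤ M → IsBddMultilinear μ ν q p T M →
      ∀ (n : ℕ) (f : ∀ i, Fin n → Ω i → ℝ), (∀ i k, MemLp (f i k) (q i) (μ i)) →
      ∀ g : Fin m → Fin n → ℝ → ℝ,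
        (∀ i k, MemLp (g i k) r (volume.restrict (Set.Icc (0 : ℝ) 1))) →
        eLpNorm
            (fun ω =>
              (∫ t : Fin m → ℝ,
                  |∑ k : Fin m → Fin n,
                      T (fun i => f i (k i)) ω * ∏ i, g i (k i) (t i)| ^ r.toReal
                  ∂(Measure.pi fun _ : Fin m => volume.restrict (Set.Icc (0 : ℝ) 1)))
                ^ (1 / r.toReal))
            p ν
          ≤ ENNReal.ofReal (C * M) *
            ∏ i, eLpNorm
              (fun x =>
                (∫ t in Set.Icc (0 : ℝ) 1,
                    |∑ kᵢ : Fin n, f i kᵢ x * g i kᵢ t| ^ r.toReal) ^ (1 / r.toReal))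
              (q i) (μ i) := by
  intro Ω _ μ _ Ω' _ ν _ T M hM hT n f hf g hg
  have : Fact (1 ≤ r) := ⟨hr1⟩
  have hr0 : r ≠ 0 := (zero_lt_one.trans_le hr1).ne'
  let G i k := (hg i k).toLp (g i k)
  have hG i k : ⇑(G i k) =ᵐ[volume.restrict (Set.Icc (0 : ℝ) 1)] g i k := (hg i k).coeFn_toLp
  rw [← eLpNorm_sum_smul_eq_eLpNorm_integral hr0 hr2 ν p
      (fun k : Fin m → Fin n => Lp.coeFn_piTensor _ hr2 fun i => hG i (k i)),
    Finset.prod_congr rfl fun i _ =>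
      (eLpNorm_sum_smul_eq_eLpNorm_integral hr0 hr2 (μ i) (q i) (hG i) (f i)).symm]
  exact hMZ.eLpNorm_sum_smul_piTensor_le hr2 hp hq hM hT f hf _ G

/-- If the multilinear Marcinkiewicz–Zygmund inequality at exponent
`r < ∞` holds with uniform constant `C`, then for every bounded multilinear operator `T`
(norm at most `M`), functions `f^i_k ∈ L^{qᵢ}(μᵢ)` and `g^i_k ∈ L^r[0,1]`, the corresponding
inequality with the `ℓ^r`-sums replaced by `L^r[0,1]`-norms of `∑_k (⋯) g^i_k(t)` holds with
constant `C · M`. -/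
theorem statement13 (m : ℕ) (hm : 1 ≤ m) (q : Fin m → ℝ≥0∞) (hq : ∀ i, 1 ≤ q i)
    (p : ℝ≥0∞) (hp : 1 ≤ p) (r : ℝ≥0∞) (hr1 : 1 ≤ r) (hr2 : r ≠ ∞)
    (C : ℝ) (hC : 0 ≤ C) (hMZ : MZprop m q p r C) :
    ∀ (Ω : Fin m → Type) [∀ i, MeasurableSpace (Ω i)] (μ : ∀ i, Measure (Ω i))
      [∀ i, SigmaFinite (μ i)]
      (Ω' : Type) [MeasurableSpace Ω'] (ν : Measure Ω') [SigmaFinite ν]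
      (T : (∀ i, Ω i → ℝ) → Ω' → ℝ) (M : ℝ), 0 ≤ M → IsBddMultilinear μ ν q p T M →
      ∀ (n : ℕ) (f : ∀ i, Fin n → Ω i → ℝ), (∀ i k, MemLp (f i k) (q i) (μ i)) →
      ∀ g : Fin m → Fin n → ℝ → ℝ,
        (∀ i k, MemLp (g i k) r (volume.restrict (Set.Icc (0 : ℝ) 1))) →
        eLpNorm
            (fun ω =>
              (∫ t : Fin m → ℝ,
                  |∑ k : Fin m → Fin n,
                      T (fun i => f i (k i)) ω * ∏ i, g i (k i) (t i)| ^ r.toReal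
                  ∂(Measure.pi fun _ : Fin m => volume.restrict (Set.Icc (0 : ℝ) 1)))
                ^ (1 / r.toReal))
            p ν
          ≤ ENNReal.ofReal (C * M) *
            ∏ i, eLpNorm
              (fun x =>
                (∫ t in Set.Icc (0 : ℝ) 1,
                    |∑ kᵢ : Fin n, f i kᵢ x * g i kᵢ t| ^ r.toReal) ^ (1 / r.toReal))
              (q i) (μ i) :=
  statement13_general m q hq p hp r hr1 hr2 C hMZ
end
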